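/- arXiv:2509.04774 — 7 statements merged into one kernel-verified Lean document; each statement's English description precedes it below -/
import Mathlib

section
/- Let (G_ω, v) be an increasing weighted tree. Then there is no simple path v_1 → v_2 → ⋯ → v_{k−1} → v_k in G with k ≥ 4 such that ω(v_1 v_2) > ω(v_2 v_3) and ω(v_{k−2} v_{k−1}) < ω(v_{k−1} v_k). -/
open SimpleGraph

noncomputable section

variable {V : Type*}

/-- `p 0, p 1, …, p k` is a simple path in `G`: the vertices are pairwise distinct and
consecutive vertices are adjacent. -/
def IsSimplePathOn (G : SimpleGraph V) (p : ℕ → V) (k : ℕ) : Prop :=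
  (∀ i ≤ k, ∀ j ≤ k, p i = p j → i = j) ∧ ∀ i < k, G.Adj (p i) (p (i + 1))

/-- The path `p 0, …, p k` is increasing for the weight `ω`. -/
def IsIncreasingPath (ω : V → V → ℕ) (p : ℕ → V) (k : ℕ) : Prop :=
  ∀ i, i + 2 ≤ k → ω (p i) (p (i + 1)) ≤ ω (p (i + 1)) (p (i + 2))

/-- A leaf is a vertex of degree one. -/
def IsLeafVertex (G : SimpleGraph V) (x : V) : Prop := ∃! y, G.Adj x y

/-- `(G_ω, v)` is an increasing weighted tree with root `v`: `G` is a tree and every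
simple path from a leaf to `v` is increasing. -/
def IsIncreasingWeightedTree (G : SimpleGraph V) (ω : V → V → ℕ) (v : V) : Prop :=
  G.IsTree ∧ ∀ (p : ℕ → V) (k : ℕ), IsSimplePathOn G p k → IsLeafVertex G (p 0) → p k = v →
    IsIncreasingPath ω p k

/-! Every simple path ending at the root `v` is increasing, not only those starting at a leaf: a
path whose first vertex is not a leaf extends backwards through another neighbour of it
(acyclicity keeps the extension simple), and in a finite tree this ends at a leaf.

Now let `p 0, …, p m` be a simple path and `p j` a vertex of it closest to `v`. A geodesic from
`p j` to `v` meets the path only in `p j`, so it extends both `p 0, …, p j` and `p m, …, p j` to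
simple paths ending at `v`. Hence the weights rise along the path up to `p j` and fall after it.
A descent at the start forces `j ≤ 1`, an ascent at the end forces `m - 1 ≤ j`, and these are
incompatible when `m ≥ 3`. -/

namespace SimpleGraph.Walk

variable {G : SimpleGraph V} {u v w x : V}

lemma IsPath.isSimplePathOn_getVert {p : G.Walk u v} (hp : p.IsPath) :
    IsSimplePathOn G p.getVert p.length :=
  ⟨fun _ hi _ hj h => hp.getVert_injOn hi hj h, fun _ hi => p.adj_getVert_succ hi⟩

lemma dist_lt_of_mem_support_tail {q : G.Walk v w} (hq : q.length = G.dist v w)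
    (hx : x ∈ q.support.tail) : G.dist x w < G.dist v w := by
  classical
  cases q with
  | nil => simp at hx
  | cons h q =>
    rw [support_cons, List.tail_cons] at hx
    calc G.dist x w ≤ (q.dropUntil x hx).length := dist_le _
      _ ≤ q.length := length_dropUntil_le_length ..
      _ < (cons h q).length := by simp
      _ = G.dist v w := hq

lemma IsPath.append_of_length_eq_dist {p : G.Walk u v} {q : G.Walk v w} (hp : p.IsPath)
    (hq : q.length = G.dist v w) (hfar : ∀ x ∈ p.support, G.dist v w ≤ G.dist x w) :
    (p.append q).IsPath := by
  rw [isPath_def, support_append, List.nodup_append]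
  refine ⟨hp.support_nodup, (q.isPath_of_length_eq_dist hq).support_nodup.sublist
    (List.tail_sublist _), fun x hxp y hyq hxy => ?_⟩
  subst hxy
  exact (hfar x hxp).not_gt (dist_lt_of_mem_support_tail hq hyq)

end SimpleGraph.Walk

open SimpleGraph Walk

variable {G : SimpleGraph V} {ω : V → V → ℕ}

lemma exists_walk_getVert_eq {p : ℕ → V} {k : ℕ} (hadj : ∀ i < k, G.Adj (p i) (p (i + 1))) :
    ∃ W : G.Walk (p 0) (p k), W.length = k ∧ ∀ i ≤ k, W.getVert i = p i := by
  induction k generalizing p with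
  | zero => exact ⟨nil, rfl, fun i hi => by simp [Nat.le_zero.mp hi]⟩
  | succ k ih =>
    obtain ⟨W, hlen, hget⟩ := ih (p := fun i => p (i + 1)) fun i hi => hadj (i + 1) (by omega)
    refine ⟨cons (hadj 0 (by omega)) W, by simp [hlen], fun i hi => ?_⟩
    cases i with
    | zero => rfl
    | succ i => exact hget i (by omega)

lemma IsSimplePathOn.exists_isPath {p : ℕ → V} {k : ℕ} (hp : IsSimplePathOn G p k) :
    ∃ W : G.Walk (p 0) (p k), W.IsPath ∧ W.length = k ∧ ∀ i ≤ k, W.getVert i = p i := by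
  obtain ⟨W, hlen, hget⟩ := exists_walk_getVert_eq hp.2
  refine ⟨W, (IsPath.getVert_injOn_iff W).mp fun a ha b hb hab => ?_, hlen, hget⟩
  simp only [Set.mem_ofPred_eq, hlen] at ha hb
  rw [hget a ha, hget b hb] at hab
  exact hp.1 a ha b hb hab

lemma IsIncreasingPath.of_eqOn {p q : ℕ → V} {j k : ℕ} (hq : IsIncreasingPath ω q k)
    (hjk : j ≤ k) (heq : ∀ i ≤ j, q i = p i) : IsIncreasingPath ω p j := by
  intro i hi
  rw [← heq i (by omega), ← heq (i + 1) (by omega), ← heq (i + 2) (by omega)]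
  exact hq i (by omega)

namespace IsIncreasingWeightedTree

variable {v : V}

theorem isIncreasingPath_getVert [Fintype V] (hG : IsIncreasingWeightedTree G ω v) {u : V}
    {q : G.Walk u v} (hq : q.IsPath) : IsIncreasingPath ω q.getVert q.length := by
  by_cases hleaf : IsLeafVertex G u
  · exact hG.2 _ _ hq.isSimplePathOn_getVert (by rwa [getVert_zero]) q.getVert_length
  by_cases hnil : q.Nil
  · intro i hi
    simp [hnil.length_eq_zero] at hi
  obtain ⟨x, hux, hxsnd⟩ : ∃ x, G.Adj u x ∧ x ≠ q.snd :=
    by_contra fun h =>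
      hleaf ⟨q.snd, q.adj_snd hnil, fun x hx => by_contra fun hx' => h ⟨x, hx, hx'⟩⟩
  have hx : x ∉ q.support := fun hx => hxsnd (hG.1.isAcyclic.eq_snd_of_adj_start hq hux hx)
  have hext : (cons hux.symm q).IsPath := hq.cons hx
  have hinc := hG.isIncreasingPath_getVert hext
  intro i hi
  exact hinc (i + 1) (by simp only [length_cons]; omega)
termination_by Fintype.card V - q.length
decreasing_by
  have := hext.length_lt
  simp only [length_cons] at this ⊢
  omega

theorem exists_peak [Fintype V] (hG : IsIncreasingWeightedTree G ω v) {p : ℕ → V} {m : ℕ}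
    (hp : IsSimplePathOn G p m) :
    ∃ j ≤ m, IsIncreasingPath ω p j ∧ IsIncreasingPath ω (fun i => p (m - i)) (m - j) := by
  obtain ⟨W, hW, hlen, hget⟩ := hp.exists_isPath
  obtain ⟨j, hj, hmin⟩ := (Finset.range (m + 1)).exists_min_image (fun i => G.dist (p i) v)
    ⟨0, by simp⟩
  rw [Finset.mem_range, Nat.lt_succ_iff] at hj
  obtain ⟨g, hg⟩ := hG.1.connected.exists_walk_length_eq_dist (W.getVert j) v
  have hfar : ∀ x ∈ W.support, G.dist (W.getVert j) v ≤ G.dist x v := by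
    intro x hx
    obtain ⟨i, rfl, hi⟩ := mem_support_iff_exists_getVert.mp hx
    rw [hget i (hlen ▸ hi), hget j hj]
    exact hmin i (by simp only [Finset.mem_range]; omega)
  have hup := hG.isIncreasingPath_getVert ((hW.take j).append_of_length_eq_dist hg
    fun x hx => hfar x ((W.isSubwalk_take j).support_subset hx))
  have hdown := hG.isIncreasingPath_getVert ((hW.drop j).reverse.append_of_length_eq_dist hg
    fun x hx => hfar x ((W.isSubwalk_drop j).support_subset (by simpa using hx)))
  simp only [length_append, take_length, length_reverse, drop_length, hlen] at hup hdown
  refine ⟨j, hj, hup.of_eqOn (by omega) fun i hi => ?_, hdown.of_eqOn (by omega) fun i hi => ?_⟩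
  · rw [getVert_append', take_length, if_pos (by omega), take_getVert, min_eq_right hi,
      hget i (by omega)]
  · rw [getVert_append', length_reverse, drop_length, if_pos (by omega), getVert_reverse,
      drop_getVert, drop_length, hget _ (by omega)]
    congr 1
    omega

end IsIncreasingWeightedTree

theorem no_decrease_then_increase_path_general {V : Type*} [Fintype V]
    (G : SimpleGraph V) (ω : V → V → ℕ)
    (hsym : ∀ a b, ω a b = ω b a)
    (v : V) (hG : IsIncreasingWeightedTree G ω v) :
    ¬ ∃ (p : ℕ → V) (m : ℕ), 3 ≤ m ∧ IsSimplePathOn G p m ∧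
      ω (p 1) (p 2) < ω (p 0) (p 1) ∧
      ω (p (m - 2)) (p (m - 1)) < ω (p (m - 1)) (p m) := by
  rintro ⟨p, m, hm, hp, hdec, hinc⟩
  obtain ⟨j, -, hup, hdown⟩ := hG.exists_peak hp
  by_cases hj : 2 ≤ j
  · exact (hup 0 hj).not_gt hdec
  · have hend : ω (p m) (p (m - 1)) ≤ ω (p (m - 1)) (p (m - 2)) := hdown 0 (by omega)
    rw [hsym (p m) (p (m - 1)), hsym (p (m - 1)) (p (m - 2))] at hend
    exact hend.not_gt hinc

/-- Lemma 1.3(2): in an increasing weighted tree `(G_ω, v)` there is no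
simple path `v_1 → ⋯ → v_k` with `k ≥ 4` vertices (i.e. `m = k - 1 ≥ 3` edges) such that
`ω(v_1 v_2) > ω(v_2 v_3)` and `ω(v_{k-2} v_{k-1}) < ω(v_{k-1} v_k)`. -/
theorem no_decrease_then_increase_path {V : Type*} [Fintype V]
    (G : SimpleGraph V) (ω : V → V → ℕ)
    (hsym : ∀ a b, ω a b = ω b a) (hpos : ∀ a b, G.Adj a b → 0 < ω a b)
    (v : V) (hG : IsIncreasingWeightedTree G ω v) :
    ¬ ∃ (p : ℕ → V) (m : ℕ), 3 ≤ m ∧ IsSimplePathOn G p m ∧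
      ω (p 1) (p 2) < ω (p 0) (p 1) ∧
      ω (p (m - 2)) (p (m - 1)) < ω (p (m - 1)) (p m) :=
  no_decrease_then_increase_path_general G ω hsym v hG
end
end

section
/- Let (G_ω, v) be an increasing weighted tree. Then every weighted subtree T_ω of G_ω (a subgraph T of G that is a tree, with weight function the restriction of ω) is an increasing weighted tree with respect to some root; precisely, if v ∈ V(T) then (T_ω, v) is an increasing weighted tree, and if v ∉ V(T) then (T_ω, v_1) is an increasing weighted tree, where v_1 is the unique vertex of T lying on the path in G from T to v. -/
/-!
A simple path of `G` ending at the root `v` can be extended backwards, one edge at a time, until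
it starts at a leaf: in a tree, a neighbour of the first vertex other than the second one is not
on the path. So every simple path of `G` ending at `v` is a suffix of an increasing path, hence
increasing. A path of `T` from a leaf to `v`, or to `v₁` and then continued by the path of `G`
from `v₁` to `v`, is such a path, and its initial part is the path of `T`.
-/

open SimpleGraph

noncomputable section

variable {V : Type*}

def walkOfAdj (G : SimpleGraph V) (p : ℕ → V) :
    ∀ k, (∀ i < k, G.Adj (p i) (p (i + 1))) → G.Walk (p 0) (p k)
  | 0, _ => Walk.nil
  | k + 1, h => (walkOfAdj G p k fun i hi => h i (by omega)).concat (h k (by omega))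

theorem length_walkOfAdj {G : SimpleGraph V} (p : ℕ → V) (k : ℕ)
    (h : ∀ i < k, G.Adj (p i) (p (i + 1))) : (walkOfAdj G p k h).length = k := by
  induction k with
  | zero => rfl
  | succ k ih => simp [walkOfAdj, ih]

theorem support_walkOfAdj {G : SimpleGraph V} (p : ℕ → V) (k : ℕ)
    (h : ∀ i < k, G.Adj (p i) (p (i + 1))) :
    (walkOfAdj G p k h).support = (List.range (k + 1)).map p := by
  induction k with
  | zero => rfl
  | succ k ih => simp [walkOfAdj, ih, List.range_succ (n := k + 1)]

/-- `q 0, …, q m, p 1, …, p k`: the vertex `p 0` is dropped, in favour of `q m`. -/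
def appendPath (q : ℕ → V) (m : ℕ) (p : ℕ → V) : ℕ → V :=
  fun i => if i ≤ m then q i else p (i - m)

section appendPath

variable {q p : ℕ → V} {m : ℕ}

theorem appendPath_of_le {i : ℕ} (hi : i ≤ m) : appendPath q m p i = q i := if_pos hi

theorem appendPath_add (hqp : q m = p 0) (i : ℕ) : appendPath q m p (m + i) = p i := by
  rcases i with _ | i
  · exact (appendPath_of_le le_rfl).trans hqp
  · simp [appendPath]

theorem IsIncreasingPath.of_appendPath_left {ω : V → V → ℕ} {k : ℕ}
    (h : IsIncreasingPath ω (appendPath q m p) (m + k)) : IsIncreasingPath ω q m := by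
  intro i hi
  have := h i (by omega)
  rwa [appendPath_of_le (by omega : i ≤ m), appendPath_of_le (by omega : i + 1 ≤ m),
    appendPath_of_le hi] at this

theorem IsIncreasingPath.of_appendPath_right {ω : V → V → ℕ} {k : ℕ} (hqp : q m = p 0)
    (h : IsIncreasingPath ω (appendPath q m p) (m + k)) : IsIncreasingPath ω p k := by
  intro i hi
  simpa only [add_assoc, appendPath_add hqp] using h (m + i) (by omega)

end appendPath

namespace IsSimplePathOn

variable {G : SimpleGraph V} {p : ℕ → V} {k : ℕ}

theorem card_le [Fintype V] (hp : IsSimplePathOn G p k) : k + 1 ≤ Fintype.card V := by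
  simpa using Finset.card_le_card_of_injOn (s := Finset.range (k + 1)) (t := Finset.univ) p
    (fun _ _ => Finset.mem_univ _)
    (fun i hi j hj hij => hp.1 i (by simpa [Nat.lt_succ_iff] using hi)
      j (by simpa [Nat.lt_succ_iff] using hj) hij)

theorem isPath_walkOfAdj (hp : IsSimplePathOn G p k) : (walkOfAdj G p k hp.2).IsPath := by
  rw [Walk.isPath_def, support_walkOfAdj]
  exact List.nodup_range.map_on fun i hi j hj => hp.1 i (by simpa [Nat.lt_succ_iff] using hi)
    j (by simpa [Nat.lt_succ_iff] using hj)

theorem of_le {j : ℕ} (hp : IsSimplePathOn G p k) (hj : j ≤ k) : IsSimplePathOn G p j :=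
  ⟨fun a ha b hb => hp.1 a (ha.trans hj) b (hb.trans hj), fun i hi => hp.2 i (by omega)⟩

theorem eq_one_of_adj_start (hG : G.IsAcyclic) (hp : IsSimplePathOn G p k) {j : ℕ} (hj : j ≤ k)
    (hadj : G.Adj (p 0) (p j)) : j = 1 := by
  have hpj := hp.of_le hj
  have := (hG.subsingleton_path _ _).elim ⟨_, hpj.isPath_walkOfAdj⟩
    ⟨Walk.cons hadj Walk.nil, by simp [hadj.ne]⟩
  simpa [length_walkOfAdj] using congrArg (fun w => w.1.length) this

theorem subgraph_coe {T : G.Subgraph} {q : ℕ → T.verts} (hq : IsSimplePathOn T.coe q k) :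
    IsSimplePathOn G (fun i => (q i).1) k :=
  ⟨fun i hi j hj hij => hq.1 i hi j hj (Subtype.ext hij), fun i hi => T.adj_sub (hq.2 i hi)⟩

theorem edge {a b : V} (h : G.Adj a b) : IsSimplePathOn G (fun i => if i = 0 then a else b) 1 :=
  ⟨fun i hi j hj hij => by
    interval_cases i <;> interval_cases j <;> simp_all [h.ne, h.ne.symm],
   fun i hi => by simpa [show i = 0 by omega] using h⟩

theorem append {q : ℕ → V} {m : ℕ} (hq : IsSimplePathOn G q m) (hp : IsSimplePathOn G p k)
    (hqp : q m = p 0) (hmeet : ∀ i ≤ m, ∀ j ≤ k, q i = p j → j = 0) :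
    IsSimplePathOn G (appendPath q m p) (m + k) := by
  have right : ∀ i, m ≤ i → appendPath q m p i = p (i - m) := fun i hi => by
    obtain ⟨i, rfl⟩ := Nat.exists_eq_add_of_le hi
    simp [appendPath_add hqp]
  refine ⟨fun i hi j hj hij => ?_, fun i hi => ?_⟩
  · rcases le_or_gt i m with him | him <;> rcases le_or_gt j m with hjm | hjm
    · exact hq.1 i him j hjm (by rwa [appendPath_of_le him, appendPath_of_le hjm] at hij)
    · rw [appendPath_of_le him, right j hjm.le] at hij
      have := hmeet i him (j - m) (by omega) hij
      omega
    · rw [right i him.le, appendPath_of_le hjm] at hij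
      have := hmeet j hjm (i - m) (by omega) hij.symm
      omega
    · rw [right i him.le, right j hjm.le] at hij
      have := hp.1 _ (by omega) _ (by omega) hij
      omega
  · rcases lt_or_ge i m with him | him
    · rw [appendPath_of_le him.le, appendPath_of_le him]
      exact hq.2 i him
    · rw [right i him, right (i + 1) (by omega), show i + 1 - m = i - m + 1 by omega]
      exact hp.2 _ (by omega)

end IsSimplePathOn

theorem exists_adj_ne_of_not_isLeafVertex {G : SimpleGraph V} {x y : V}
    (hx : ¬IsLeafVertex G x) (hxy : G.Adj x y) : ∃ u, G.Adj x u ∧ u ≠ y := by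
  by_contra! h
  exact hx ⟨y, hxy, h⟩

theorem IsIncreasingWeightedTree.isIncreasingPath [Fintype V] {G : SimpleGraph V}
    {ω : V → V → ℕ} {v : V} (hG : IsIncreasingWeightedTree G ω v) {p : ℕ → V} {k : ℕ}
    (hp : IsSimplePathOn G p k) (hpk : p k = v) : IsIncreasingPath ω p k := by
  by_cases hleaf : IsLeafVertex G (p 0)
  · exact hG.2 p k hp hleaf hpk
  rcases lt_or_ge k 2 with hk | hk
  · intro i hi
    omega
  obtain ⟨u, hu, hu1⟩ := exists_adj_ne_of_not_isLeafVertex hleaf (hp.2 0 (by omega))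
  have hmeet : ∀ i ≤ 1, ∀ j ≤ k, (if i = 0 then u else p 0) = p j → j = 0 := by
    intro i hi j hj hij
    rcases i with _ | i
    · rw [if_pos rfl] at hij
      subst hij
      cases hp.eq_one_of_adj_start hG.1.isAcyclic hj hu
      exact absurd rfl hu1
    · exact hp.1 j hj 0 (by omega) (by simpa using hij.symm)
  have hp' := (IsSimplePathOn.edge hu.symm).append hp (by simp) hmeet
  exact (hG.isIncreasingPath hp' (by rw [appendPath_add (by simp), hpk])).of_appendPath_right
    (by simp)
termination_by Fintype.card V - k
decreasing_by
  have := hp'.card_le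
  omega

theorem weighted_subtree_is_increasing_general {V : Type*} [Fintype V]
    (G : SimpleGraph V) (ω : V → V → ℕ)
    (v : V) (hG : IsIncreasingWeightedTree G ω v)
    (T : G.Subgraph) (hT : T.coe.IsTree) :
    (∀ hv : v ∈ T.verts,
      IsIncreasingWeightedTree T.coe (fun a b => ω a.1 b.1) ⟨v, hv⟩) ∧
    (v ∉ T.verts → ∀ (v₁ : V) (hv₁ : v₁ ∈ T.verts) (p : ℕ → V) (k : ℕ),
      IsSimplePathOn G p k → p 0 = v₁ → p k = v → (∀ i ≤ k, p i ∈ T.verts → i = 0) →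
      IsIncreasingWeightedTree T.coe (fun a b => ω a.1 b.1) ⟨v₁, hv₁⟩) := by
  refine ⟨fun hv => ⟨hT, fun q m hq _ hqm => ?_⟩,
    fun _ v₁ hv₁ p k hp hp0 hpk hmeet => ⟨hT, fun q m hq _ hqm => ?_⟩⟩
  · exact hG.isIncreasingPath hq.subgraph_coe (congrArg Subtype.val hqm)
  · have hqp : (q m).1 = p 0 := by rw [hqm, hp0]
    have hr := hq.subgraph_coe.append hp hqp fun i _ j hj hij => hmeet j hj (hij ▸ (q i).2)
    exact (hG.isIncreasingPath hr (by rw [appendPath_add hqp, hpk])).of_appendPath_left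

/-- Lemma 1.4: every weighted subtree `T_ω` of an increasing weighted tree
`(G_ω, v)` is an increasing weighted tree: if `v ∈ V(T)` then `(T_ω, v)` is one, and if
`v ∉ V(T)` then `(T_ω, v₁)` is one, where `v₁` is the unique vertex of `T` lying on the path
in `G` from `T` to `v` (i.e. any vertex `v₁ ∈ V(T)` admitting a simple path from `v₁` to `v`
in `G` meeting `T` only at `v₁`). -/
theorem weighted_subtree_is_increasing {V : Type*} [Fintype V]
    (G : SimpleGraph V) (ω : V → V → ℕ)
    (hsym : ∀ a b, ω a b = ω b a) (hpos : ∀ a b, G.Adj a b → 0 < ω a b)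
    (v : V) (hG : IsIncreasingWeightedTree G ω v)
    (T : G.Subgraph) (hT : T.coe.IsTree) :
    (∀ hv : v ∈ T.verts,
      IsIncreasingWeightedTree T.coe (fun a b => ω a.1 b.1) ⟨v, hv⟩) ∧
    (v ∉ T.verts → ∀ (v₁ : V) (hv₁ : v₁ ∈ T.verts) (p : ℕ → V) (k : ℕ),
      IsSimplePathOn G p k → p 0 = v₁ → p k = v → (∀ i ≤ k, p i ∈ T.verts → i = 0) →
      IsIncreasingWeightedTree T.coe (fun a b => ω a.1 b.1) ⟨v₁, hv₁⟩) :=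
  weighted_subtree_is_increasing_general G ω v hG T hT
end
end

section
/- Let (G_ω, v) be an increasing weighted tree and assume G is not a star graph with center v. Then there exists a longest simple path v = v_0 → v_1 → ⋯ → v_k in G starting at v such that: (1) v_k is a leaf of G; (2) if u ∈ N_G(v_{k−2}) is not a leaf, then ω(v_{k−1} v_{k−2}) ≤ ω(v_{k−2} u); (3) v_{k−2} is the only non-leaf vertex in N_G(v_{k−1}); (4) ω(v_{k−1} u) ≤ ω(v_{k−1} v_{k−2}) for all u ∈ N_G(v_{k−1}); and (5) ω(v_{k−1} v_k) ≤ ω(v_{k−1} u) for all u ∈ N_G(v_{k−1}). -/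
open SimpleGraph

noncomputable section

variable {V : Type*}

/-- `G` is a star graph with center `v`: a tree all of whose edges are incident to `v`. -/
def IsStarWithCenter (G : SimpleGraph V) (v : V) : Prop :=
  G.IsTree ∧ ∀ a b, G.Adj a b → a = v ∨ b = v

/-!
Take a longest path `v = p 0, …, p (k + 2)` from the root: its endpoint is a leaf, and read
backwards it is a leaf-to-root path, hence increasing. Replacing `p (k + 2)` by another
neighbour `u` of `p (k + 1)` gives another longest path, so `u` is a leaf (3) and
`ω(u, p (k + 1)) ≤ ω(p (k + 1), p k)` (4). Choosing, among all longest paths, one that minimizes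
the weight of the second-to-last edge and then that of the last edge yields (5) from the same
swap, and (2) from the longest path `p 0, …, p k, u, w` through a non-leaf neighbour `u` of `p k`
off the path and a further neighbour `w` of `u`.
-/

namespace IsSimplePathOn

variable {G : SimpleGraph V} {p : ℕ → V} {k : ℕ}

lemma mono (hp : IsSimplePathOn G p k) {j : ℕ} (hj : j ≤ k) : IsSimplePathOn G p j :=
  ⟨fun a ha b hb => hp.1 a (ha.trans hj) b (hb.trans hj), fun i hi => hp.2 i (hi.trans_le hj)⟩

lemma reverse (hp : IsSimplePathOn G p k) : IsSimplePathOn G (fun i => p (k - i)) k := by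
  refine ⟨fun i hi j hj hij => ?_, fun i hi => ?_⟩
  · have := hp.1 (k - i) (by omega) (k - j) (by omega) hij
    omega
  · have := (hp.2 (k - (i + 1)) (by omega)).symm
    rwa [show k - (i + 1) + 1 = k - i by omega] at this

lemma length_lt_card [Fintype V] (hp : IsSimplePathOn G p k) : k < Fintype.card V := by
  simpa using Fintype.card_le_of_injective (fun i : Fin (k + 1) => p i)
    fun a b hab => Fin.ext (hp.1 a a.is_le b b.is_le hab)

/-- Every edge of an acyclic graph is a bridge, but `p i, …, p j` connects `p i` to `p j`
without using the edge `p i p j` unless `j = i + 1`. -/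
lemma eq_succ_of_adj (hac : G.IsAcyclic) (hp : IsSimplePathOn G p k) {i j : ℕ} (hij : i < j)
    (hj : j ≤ k) (hadj : G.Adj (p i) (p j)) : j = i + 1 := by
  by_contra hne
  apply isBridge_iff.mp (isAcyclic_iff_forall_adj_isBridge.mp hac hadj)
  have hreach : ∀ t ≤ j - i, (G.deleteEdges {s(p i, p j)}).Reachable (p i) (p (i + t)) := by
    intro t
    induction t with
    | zero => exact fun _ => Reachable.refl _
    | succ t ih =>
      intro ht
      refine (ih (by omega)).trans (Adj.reachable ?_)
      rw [deleteEdges_adj, Set.mem_singleton_iff, Sym2.eq_iff]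
      refine ⟨hp.2 (i + t) (by omega), ?_⟩
      rintro (⟨h1, h2⟩ | ⟨-, h2⟩)
      · have := hp.1 (i + t) (by omega) i (by omega) h1
        have := hp.1 _ (by omega) j hj h2
        omega
      · have := hp.1 _ (by omega) _ (by omega) h2
        omega
  simpa [show i + (j - i) = j by omega] using hreach (j - i) le_rfl

lemma update_succ (hac : G.IsAcyclic) (hp : IsSimplePathOn G p k) {u : V}
    (hu : G.Adj (p k) u) (hback : 0 < k → u ≠ p (k - 1)) :
    IsSimplePathOn G (Function.update p (k + 1) u) (k + 1) := by
  have hnew : ∀ t ≤ k, p t ≠ u := by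
    rintro t ht rfl
    have hlt : t < k := lt_of_le_of_ne ht fun h => hu.ne (congrArg p h.symm)
    have := hp.eq_succ_of_adj hac hlt le_rfl hu.symm
    exact hback (by omega) (congrArg p (by omega))
  refine ⟨fun i hi j hj hij => ?_, fun i hi => ?_⟩
  · rcases eq_or_lt_of_le hi with rfl | hi <;> rcases eq_or_lt_of_le hj with rfl | hj
    · rfl
    · simp only [Function.update_self, Function.update_of_ne hj.ne] at hij
      exact absurd hij.symm (hnew j (by omega))
    · simp only [Function.update_self, Function.update_of_ne hi.ne] at hij
      exact absurd hij (hnew i (by omega))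
    · simp only [Function.update_of_ne hi.ne, Function.update_of_ne hj.ne] at hij
      exact hp.1 i (by omega) j (by omega) hij
  · rcases eq_or_lt_of_le (Nat.le_of_lt_succ hi) with rfl | hi
    · simpa using hu
    · simpa [Function.update_of_ne (show i ≠ k + 1 by omega),
        Function.update_of_ne (show i + 1 ≠ k + 1 by omega)] using hp.2 i hi

end IsSimplePathOn

lemma SimpleGraph.Walk.IsPath.isSimplePathOn_getVert_s3 {G : SimpleGraph V} {a b : V}
    {w : G.Walk a b} (hw : w.IsPath) : IsSimplePathOn G w.getVert w.length :=
  ⟨fun _ hi _ hj => hw.getVert_injOn hi hj, fun _ hi => w.adj_getVert_succ hi⟩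

def IsLongestPathFrom (G : SimpleGraph V) (v : V) (p : ℕ → V) (k : ℕ) : Prop :=
  IsSimplePathOn G p k ∧ p 0 = v ∧ ∀ (q : ℕ → V) (m : ℕ), IsSimplePathOn G q m → q 0 = v → m ≤ k

lemma exists_isLongestPathFrom [Fintype V] (G : SimpleGraph V) (v : V) :
    ∃ p k, IsLongestPathFrom G v p k := by
  classical
  let P := fun m => ∃ q : ℕ → V, IsSimplePathOn G q m ∧ q 0 = v
  have h0 : P 0 :=
    ⟨fun _ => v, ⟨fun _ hi _ hj _ => by omega, fun _ hi => absurd hi (by omega)⟩, rfl⟩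
  have hbound : ∀ m, P m → m ≤ Fintype.card V := fun m ⟨q, hq, _⟩ => hq.length_lt_card.le
  obtain ⟨p, hp, hp0⟩ := Nat.findGreatest_spec (Nat.zero_le _) h0
  exact ⟨p, _, hp, hp0, fun q m hq hq0 => Nat.le_findGreatest (hbound m ⟨q, hq, hq0⟩) ⟨q, hq, hq0⟩⟩

def tailWeights (ω : V → V → ℕ) (k : ℕ) (p : ℕ → V) : ℕ ×ₗ ℕ :=
  toLex (ω (p (k + 1)) (p k), ω (p (k + 1)) (p (k + 2)))

namespace IsLongestPathFrom

variable {G : SimpleGraph V} {ω : V → V → ℕ} {v : V} {p : ℕ → V} {k : ℕ}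

lemma adj_last (hac : G.IsAcyclic) (h : IsLongestPathFrom G v p (k + 1)) {w : V}
    (hw : G.Adj (p (k + 1)) w) : w = p k := by
  by_contra hne
  have := h.2.2 _ _ (h.1.update_succ hac hw fun _ => hne) (by simpa using h.2.1)
  omega

lemma isLeafVertex_last (hac : G.IsAcyclic) (h : IsLongestPathFrom G v p (k + 1)) :
    IsLeafVertex G (p (k + 1)) :=
  ⟨p k, (h.1.2 k k.lt_succ_self).symm, fun _ hw => h.adj_last hac hw⟩

lemma update_last (hac : G.IsAcyclic) (h : IsLongestPathFrom G v p (k + 2)) {u : V}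
    (hu : G.Adj (p (k + 1)) u) (hne : u ≠ p k) :
    IsLongestPathFrom G v (Function.update p (k + 2) u) (k + 2) :=
  ⟨(h.1.mono k.succ.le_succ).update_succ hac hu fun _ => hne, by simpa using h.2.1, h.2.2⟩

lemma two_le (hT : G.IsTree) (hstar : ¬ IsStarWithCenter G v) (h : IsLongestPathFrom G v p k) :
    2 ≤ k := by
  obtain ⟨a, b, hab, ha, hb⟩ : ∃ a b, G.Adj a b ∧ a ≠ v ∧ b ≠ v := by
    by_contra! hcon
    exact hstar ⟨hT, fun a b hab => or_iff_not_imp_left.mpr (hcon a b hab)⟩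
  obtain ⟨w, hw⟩ := hT.1.exists_isPath v a
  have hlen : 1 ≤ w.length :=
    Nat.one_le_iff_ne_zero.mpr fun h0 => ha (w.eq_of_length_eq_zero h0).symm
  rcases eq_or_lt_of_le hlen with h1 | h2
  · have hq := hw.isSimplePathOn_getVert_s3.update_succ hT.2 (u := b) (by simpa using hab)
      fun _ => by simpa [← h1] using hb
    have := h.2.2 _ _ hq (by simp)
    omega
  · have := h.2.2 _ _ hw.isSimplePathOn_getVert_s3 (by simp)
    omega

lemma isIncreasingPath_reverse (hG : IsIncreasingWeightedTree G ω v)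
    (h : IsLongestPathFrom G v p (k + 1)) : IsIncreasingPath ω (fun i => p (k + 1 - i)) (k + 1) :=
  hG.2 _ _ h.1.reverse (by simpa using h.isLeafVertex_last hG.1.2) (by simpa using h.2.1)

lemma eq_of_adj_of_not_isLeafVertex (hac : G.IsAcyclic) (h : IsLongestPathFrom G v p (k + 2))
    {u : V} (hu : G.Adj (p (k + 1)) u) (hnl : ¬ IsLeafVertex G u) : u = p k := by
  by_contra hne
  apply hnl
  simpa using (h.update_last hac hu hne).isLeafVertex_last hac

lemma weight_le_weight_penultimate (hG : IsIncreasingWeightedTree G ω v)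
    (hsym : ∀ a b, ω a b = ω b a) (h : IsLongestPathFrom G v p (k + 2)) {u : V}
    (hu : G.Adj (p (k + 1)) u) : ω (p (k + 1)) u ≤ ω (p (k + 1)) (p k) := by
  by_cases hne : u = p k
  · rw [hne]
  have := (h.update_last hG.1.2 hu hne).isIncreasingPath_reverse hG 0 (by omega)
  rw [hsym]
  simpa using this

lemma weight_last_le (hG : IsIncreasingWeightedTree G ω v) (hsym : ∀ a b, ω a b = ω b a)
    (h : IsLongestPathFrom G v p (k + 2))
    (hmin : ∀ q, IsLongestPathFrom G v q (k + 2) → tailWeights ω k p ≤ tailWeights ω k q)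
    {u : V} (hu : G.Adj (p (k + 1)) u) : ω (p (k + 1)) (p (k + 2)) ≤ ω (p (k + 1)) u := by
  by_cases hne : u = p k
  · rw [hne]
    exact h.weight_le_weight_penultimate hG hsym (h.1.2 (k + 1) (by omega))
  simpa [tailWeights, Prod.Lex.toLex_le_toLex'] using hmin _ (h.update_last hG.1.2 hu hne)

lemma weight_penultimate_le (hG : IsIncreasingWeightedTree G ω v) (hsym : ∀ a b, ω a b = ω b a)
    (h : IsLongestPathFrom G v p (k + 2))
    (hmin : ∀ q, IsLongestPathFrom G v q (k + 2) → tailWeights ω k p ≤ tailWeights ω k q)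
    {u : V} (hu : G.Adj (p k) u) (hnl : ¬ IsLeafVertex G u) :
    ω (p (k + 1)) (p k) ≤ ω (p k) u := by
  by_cases h1 : u = p (k + 1)
  · rw [h1, hsym]
  by_cases h0 : 0 < k ∧ u = p (k - 1)
  · obtain ⟨hk, rfl⟩ := h0
    have := h.isIncreasingPath_reverse hG 1 (by omega)
    simpa using this
  obtain ⟨w, hw, hwne⟩ : ∃ w, G.Adj u w ∧ w ≠ p k := by
    by_contra! hcon
    exact hnl ⟨p k, hu.symm, hcon⟩
  have hq₁ := (h.1.mono (by omega : k ≤ k + 2)).update_succ hG.1.2 hu fun hk e => h0 ⟨hk, e⟩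
  have hq₂ := hq₁.update_succ hG.1.2 (u := w) (by simpa using hw) fun _ => by simpa using hwne
  have := (Prod.Lex.toLex_le_toLex'.mp (hmin _ ⟨hq₂, by simpa using h.2.1, h.2.2⟩)).1
  rw [hsym (p k)]
  simpa [Function.update_apply, show k ≠ k + 1 + 1 by omega] using this

end IsLongestPathFrom

theorem exists_good_longest_path_general {V : Type*} [Fintype V]
    (G : SimpleGraph V) (ω : V → V → ℕ)
    (hsym : ∀ a b, ω a b = ω b a)
    (v : V) (hG : IsIncreasingWeightedTree G ω v)
    (hstar : ¬ IsStarWithCenter G v) :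
    ∃ (p : ℕ → V) (k : ℕ), IsSimplePathOn G p k ∧ p 0 = v ∧
      (∀ (q : ℕ → V) (m : ℕ), IsSimplePathOn G q m → q 0 = v → m ≤ k) ∧ 2 ≤ k ∧
      IsLeafVertex G (p k) ∧
      (∀ u, G.Adj (p (k - 2)) u → ¬ IsLeafVertex G u →
        ω (p (k - 1)) (p (k - 2)) ≤ ω (p (k - 2)) u) ∧
      (∀ u, G.Adj (p (k - 1)) u → ¬ IsLeafVertex G u → u = p (k - 2)) ∧
      (∀ u, G.Adj (p (k - 1)) u → ω (p (k - 1)) u ≤ ω (p (k - 1)) (p (k - 2))) ∧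
      (∀ u, G.Adj (p (k - 1)) u → ω (p (k - 1)) (p k) ≤ ω (p (k - 1)) u) := by
  obtain ⟨p₀, k, hp₀⟩ := exists_isLongestPathFrom G v
  obtain ⟨k, rfl⟩ := Nat.exists_eq_add_of_le' (hp₀.two_le hG.1 hstar)
  let S := {q | IsLongestPathFrom G v q (k + 2)}
  let p := Function.argminOn (tailWeights ω k) S ⟨p₀, hp₀⟩
  have hp : IsLongestPathFrom G v p (k + 2) := Function.argminOn_mem _ S _
  have hmin (q) (hq : IsLongestPathFrom G v q (k + 2)) : tailWeights ω k p ≤ tailWeights ω k q :=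
    Function.argminOn_le _ S hq
  exact ⟨p, k + 2, hp.1, hp.2.1, hp.2.2, le_add_self, hp.isLeafVertex_last hG.1.2,
    fun _ hu hnl => hp.weight_penultimate_le hG hsym hmin hu hnl,
    fun _ hu hnl => hp.eq_of_adj_of_not_isLeafVertex hG.1.2 hu hnl,
    fun _ hu => hp.weight_le_weight_penultimate hG hsym hu,
    fun _ hu => hp.weight_last_le hG hsym hmin hu⟩

/-- Lemma 1.5: if `(G_ω, v)` is an increasing weighted tree and `G` is not
a star graph with center `v`, then there is a longest simple path `v = p 0 → ⋯ → p k`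
starting at `v` satisfying the five listed conditions. -/
theorem exists_good_longest_path {V : Type*} [Fintype V]
    (G : SimpleGraph V) (ω : V → V → ℕ)
    (hsym : ∀ a b, ω a b = ω b a) (hpos : ∀ a b, G.Adj a b → 0 < ω a b)
    (v : V) (hG : IsIncreasingWeightedTree G ω v)
    (hstar : ¬ IsStarWithCenter G v) :
    ∃ (p : ℕ → V) (k : ℕ), IsSimplePathOn G p k ∧ p 0 = v ∧
      (∀ (q : ℕ → V) (m : ℕ), IsSimplePathOn G q m → q 0 = v → m ≤ k) ∧ 2 ≤ k ∧
      IsLeafVertex G (p k) ∧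
      (∀ u, G.Adj (p (k - 2)) u → ¬ IsLeafVertex G u →
        ω (p (k - 1)) (p (k - 2)) ≤ ω (p (k - 2)) u) ∧
      (∀ u, G.Adj (p (k - 1)) u → ¬ IsLeafVertex G u → u = p (k - 2)) ∧
      (∀ u, G.Adj (p (k - 1)) u → ω (p (k - 1)) u ≤ ω (p (k - 1)) (p (k - 2))) ∧
      (∀ u, G.Adj (p (k - 1)) u → ω (p (k - 1)) (p k) ≤ ω (p (k - 1)) u) :=
  exists_good_longest_path_general G ω hsym v hG hstar
end
end

section
/- Let (G_ω, v) be an increasing weighted tree and let S be an independent set of G. Then N_G(S) is an independent set of the graph G_S. -/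
open SimpleGraph

noncomputable section

variable {V : Type*}

/-- `S` is an independent set of `G`. -/
def IsIndepSetOn (G : SimpleGraph V) (S : Set V) : Prop :=
  ∀ a ∈ S, ∀ b ∈ S, ¬ G.Adj a b

/-- `N_G(S)`, the neighbourhood of the set `S`. -/
def setNbhd (G : SimpleGraph V) (S : Set V) : Set V :=
  {u | u ∉ S ∧ ∃ z ∈ S, G.Adj u z}

/-- `ν_S(u) = min { ω(uz) ∣ z ∈ S ∩ N_G(u) }`. -/
def nuWt (G : SimpleGraph V) (ω : V → V → ℕ) (S : Set V) (u : V) : ℕ :=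
  sInf {w | ∃ z ∈ S, G.Adj u z ∧ w = ω u z}

/-- The graph `G_S`: its vertices are those outside `S`, its edges are those of `G ∖ S`
except that every edge `uz` with `u ∈ N_G(S)` and `ω(uz) ≥ ν_S(u)` is removed. -/
def GSgraph (G : SimpleGraph V) (ω : V → V → ℕ) (S : Set V) : SimpleGraph V where
  Adj a b := G.Adj a b ∧ a ∉ S ∧ b ∉ S ∧
    (a ∈ setNbhd G S → ω a b < nuWt G ω S a) ∧
    (b ∈ setNbhd G S → ω b a < nuWt G ω S b)
  symm := by
    constructor
    rintro a b ⟨h1, h2, h3, h4, h5⟩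
    exact ⟨h1.symm, h3, h2, h5, h4⟩
  loopless := by
    constructor
    rintro a ⟨h, -⟩
    exact G.ne_of_adj h rfl

/-
Let `a, b ∈ N_G(S)` be adjacent, and orient the edge so that `b` lies on the path from `a` to the
root. The weight `ν_S(a)` is attained at some `z ∈ S`, and `z ≠ b` since `b ∉ S`. Extending the
path `z, a, b, …, v` backwards as far as possible ends at a leaf, so along this leaf-to-root path
`ω(za) ≤ ω(ab)`, i.e. `ν_S(a) ≤ ω(ab)`: the edge `ab` is removed in `G_S`.
-/

namespace SimpleGraph

variable {G : SimpleGraph V}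

lemma Walk.IsPath.isSimplePathOn_getVert_s4 {u v : V} {p : G.Walk u v} (hp : p.IsPath) :
    IsSimplePathOn G p.getVert p.length :=
  ⟨fun _ hi _ hj hij => hp.getVert_injOn hi hj hij, fun _ hi => p.adj_getVert_succ hi⟩

lemma IsAcyclic.exists_isLeafVertex_isPath_append [Fintype V] (hG : G.IsAcyclic) {w v : V}
    {q : G.Walk w v} (hq : q.IsPath) (hq0 : ¬ q.Nil) :
    ∃ (l : V) (r : G.Walk l w), IsLeafVertex G l ∧ (r.append q).IsPath := by
  set lengths : Set ℕ := {n | ∃ (l : V) (r : G.Walk l w), (r.append q).IsPath ∧ r.length = n}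
  have hbdd : BddAbove lengths := by
    refine ⟨Fintype.card V, ?_⟩
    rintro _ ⟨l, r, hr, rfl⟩
    have := hr.length_lt
    rw [Walk.length_append] at this
    omega
  obtain ⟨l, r, hr, hlen⟩ := Nat.sSup_mem (s := lengths) ⟨0, w, .nil, by simpa using hq, rfl⟩ hbdd
  refine ⟨l, r, ⟨(r.append q).snd, Walk.adj_snd ?_, fun u hlu => ?_⟩, hr⟩
  · cases r <;> simp [hq0]
  by_contra hu
  have hus : u ∉ (r.append q).support := fun h => hu (hG.eq_snd_of_adj_start hr hlu h)
  have hlonger : r.length + 1 ∈ lengths :=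
    ⟨u, Walk.cons hlu.symm r, by rw [Walk.cons_append]; exact hr.cons hus, rfl⟩
  have := le_csSup hbdd hlonger
  omega

end SimpleGraph

variable {G : SimpleGraph V} {ω : V → V → ℕ}

lemma IsIncreasingWeightedTree.weight_le_of_isPath [Fintype V] {v : V}
    (hG : IsIncreasingWeightedTree G ω v) {x w : V} {p : G.Walk x v} (hp : p.IsPath)
    (hp0 : ¬ p.Nil) (hwx : G.Adj w x) (hw : w ≠ p.snd) :
    ω w x ≤ ω x p.snd := by
  have hq : (Walk.cons hwx p).IsPath :=
    hp.cons fun h => hw (hG.1.isAcyclic.eq_snd_of_adj_start hp hwx.symm h)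
  obtain ⟨l, r, hl, hP⟩ := hG.1.isAcyclic.exists_isLeafVertex_isPath_append hq (by simp)
  have hinc := hG.2 _ _ hP.isSimplePathOn_getVert_s4 (by simpa using hl) (Walk.getVert_length _)
    r.length (by simp [Nat.one_le_iff_ne_zero, Walk.length_eq_zero_iff, hp0])
  simpa [Walk.getVert_append] using hinc

lemma exists_nuWt_eq {S : Set V} {x : V} (hx : x ∈ setNbhd G S) :
    ∃ z ∈ S, G.Adj x z ∧ nuWt G ω S x = ω x z := by
  obtain ⟨-, z, hz, hxz⟩ := hx
  obtain ⟨z, hzS, hxz, h⟩ : nuWt G ω S x ∈ {w | ∃ z ∈ S, G.Adj x z ∧ w = ω x z} :=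
    Nat.sInf_mem ⟨ω x z, z, hz, hxz, rfl⟩
  exact ⟨z, hzS, hxz, h⟩

lemma IsIncreasingWeightedTree.nuWt_le_of_isPath [Fintype V] {v : V}
    (hG : IsIncreasingWeightedTree G ω v) (hsym : ∀ a b, ω a b = ω b a) {S : Set V} {x : V}
    (hx : x ∈ setNbhd G S) {p : G.Walk x v} (hp : p.IsPath) (hp0 : ¬ p.Nil) (hS : p.snd ∉ S) :
    nuWt G ω S x ≤ ω x p.snd := by
  obtain ⟨z, hzS, hxz, hz⟩ := exists_nuWt_eq hx
  rw [hz, hsym]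
  exact hG.weight_le_of_isPath hp hp0 hxz.symm (ne_of_mem_of_not_mem hzS hS)

theorem nbhd_indep_in_GS_general {V : Type*} [Fintype V]
    (G : SimpleGraph V) (ω : V → V → ℕ)
    (hsym : ∀ a b, ω a b = ω b a)
    (v : V) (hG : IsIncreasingWeightedTree G ω v)
    (S : Set V) :
    IsIndepSetOn (GSgraph G ω S) (setNbhd G S) := by
  rintro a ha b hb ⟨hab, haS, hbS, hνa, hνb⟩
  obtain ⟨pa, hpa, -⟩ := hG.1.existsUnique_path a v
  by_cases hb' : b ∈ pa.support
  · obtain rfl := hG.1.isAcyclic.eq_snd_of_adj_start hpa hab hb'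
    have hpa0 : ¬ pa.Nil := by rintro ⟨⟩; exact hab.ne rfl
    exact (hG.nuWt_le_of_isPath hsym ha hpa hpa0 hbS).not_gt (hνa ha)
  · have hpb : (Walk.cons hab.symm pa).IsPath := hpa.cons hb'
    have hle := hG.nuWt_le_of_isPath hsym hb hpb Walk.not_nil_cons (by rwa [Walk.snd_cons])
    rw [Walk.snd_cons] at hle
    exact hle.not_gt (hνb hb)

/-- Lemma 1.7(1): if `(G_ω, v)` is an increasing weighted tree and `S` is
an independent set of `G`, then `N_G(S)` is an independent set of the graph `G_S`. -/
theorem nbhd_indep_in_GS {V : Type*} [Fintype V]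
    (G : SimpleGraph V) (ω : V → V → ℕ)
    (hsym : ∀ a b, ω a b = ω b a) (hpos : ∀ a b, G.Adj a b → 0 < ω a b)
    (v : V) (hG : IsIncreasingWeightedTree G ω v)
    (S : Set V) (hS : IsIndepSetOn G S) :
    IsIndepSetOn (GSgraph G ω S) (setNbhd G S) :=
  nbhd_indep_in_GS_general G ω hsym v hG S
end
end

section
/- Let R = K[x_1,…,x_n] be a polynomial ring over a field K, let I ⊆ R be a monomial ideal, and let x^p y^q ∈ 𝒢(I) be a minimal monomial generator of I, where x, y are distinct variables and p, q ≥ 1. Suppose that every f ∈ 𝒢(I) satisfies: (1) if f ≠ x^p y^q then y ∤ f, and (2) if x ∣ f then deg_x(f) ≥ p. Then (I^t : x^p y^q) = I^{t−1} for all integers t ≥ 2. -/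
open MvPolynomial

noncomputable section

variable {n : ℕ} {K : Type*} [Field K]

/-- `I` is a monomial ideal: it is generated by (monic) monomials. -/
def IsMonomialIdeal (I : Ideal (MvPolynomial (Fin n) K)) : Prop :=
  ∃ S : Set (Fin n →₀ ℕ), I = Ideal.span ((fun d => (monomial d (1 : K) : MvPolynomial (Fin n) K)) '' S)

/-- `𝒢(I)`: the unique minimal set of monomial generators of a monomial ideal `I`, i.e. the
monic monomials of `I` which are minimal with respect to divisibility among monomials of `I`. -/
def minimalMonomialGens (I : Ideal (MvPolynomial (Fin n) K)) : Set (MvPolynomial (Fin n) K) :=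
  {f | (∃ d : Fin n →₀ ℕ, f = monomial d (1 : K)) ∧ f ∈ I ∧
    ∀ g : MvPolynomial (Fin n) K,
      (∃ d : Fin n →₀ ℕ, g = monomial d (1 : K)) → g ∈ I → g ∣ f → g = f}

/-! Let `μ = single i p + single j q` be the exponent of `x^p y^q` and `G` the set of exponents of
`𝒢(I)`, so that `I^t` is spanned by the monomials with exponents in `t • G`. If `f x^p y^q ∈ I^t`,
every exponent `c` of `f` satisfies `g₁ + ⋯ + g_t ≤ c + μ` with all `gₖ ∈ G`. Either some `gₖ` is `μ`,
or no `gₖ` involves `y`, and then a `gₖ` with nonzero `x`-exponent, whose `x`-exponent is `≥ p`,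
absorbs the `x^p`. In both cases dropping that `gₖ` leaves `t - 1` generators whose sum is `≤ c`. -/

open Pointwise

namespace Finsupp

variable {σ ι : Type*} [Fintype ι] [Nonempty ι] {G : Set (σ →₀ ℕ)} {i j : σ} {p q : ℕ}

theorem exists_sum_le_add_of_sum_le_add_single (hij : i ≠ j)
    (hj : ∀ g ∈ G, g ≠ single i p + single j q → g j = 0)
    (hi : ∀ g ∈ G, g i ≠ 0 → p ≤ g i)
    {f : ι → σ →₀ ℕ} (hf : ∀ k, f k ∈ G) {c : σ →₀ ℕ}
    (hle : ∑ k, f k ≤ c + (single i p + single j q)) :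
    ∃ k, ∑ k, f k ≤ c + f k := by
  by_cases hμ : ∃ k, f k = single i p + single j q
  · obtain ⟨k, hk⟩ := hμ
    exact ⟨k, hk ▸ hle⟩
  push Not at hμ
  have hsum_j : (∑ k, f k) j = 0 := by
    simp [finsetSum_apply, hj _ (hf _) (hμ _)]
  -- a summand carrying `i`, if there is one, absorbs the `p` by `hi`
  obtain ⟨k, hk⟩ : ∃ k, (∑ k, f k) i ≠ 0 → f k i ≠ 0 := by
    by_cases h : ∃ k, f k i ≠ 0
    · exact h.imp fun k hk _ => hk
    · exact ⟨Classical.arbitrary ι, fun hs => absurd (by simpa [finsetSum_apply] using h) hs⟩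
  have hpk := hi _ (hf k)
  refine ⟨k, fun l => ?_⟩
  have hl := hle l
  simp only [add_apply] at hl ⊢
  by_cases hli : l = i
  · subst hli
    simp only [single_eq_same, single_eq_of_ne hij] at hl
    omega
  · by_cases hlj : l = j
    · subst hlj; omega
    · simp only [single_eq_of_ne hli, single_eq_of_ne hlj] at hl; omega

theorem exists_mem_nsmul_le_of_mem_succ_nsmul (hij : i ≠ j)
    (hj : ∀ g ∈ G, g ≠ single i p + single j q → g j = 0)
    (hi : ∀ g ∈ G, g i ≠ 0 → p ≤ g i)
    {t : ℕ} {d c : σ →₀ ℕ} (hd : d ∈ (t + 1) • G) (hle : d ≤ c + (single i p + single j q)) :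
    ∃ d' ∈ t • G, d' ≤ c := by
  obtain ⟨f, hf, rfl⟩ := Set.mem_nsmul_iff_sum.mp hd
  obtain ⟨k, hk⟩ := exists_sum_le_add_of_sum_le_add_single hij hj hi hf hle
  rw [Fin.sum_univ_succAbove f k, add_comm c] at hk
  exact ⟨_, Set.mem_nsmul_iff_sum.mpr ⟨_, fun l => hf _, rfl⟩, le_of_add_le_add_left hk⟩

end Finsupp

namespace MvPolynomial

variable {σ R : Type*} [CommSemiring R]

theorem span_monomial_image_pow (S : Set (σ →₀ ℕ)) (t : ℕ) :
    Ideal.span ((monomial · (1 : R)) '' S) ^ t = Ideal.span ((monomial · (1 : R)) '' (t • S)) := by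
  induction t with
  | zero => simp
  | succ t ih =>
    rw [pow_succ', ih, Ideal.span_mul_span', succ_nsmul', ← Set.image2_add, ← Set.image2_mul,
      Set.image2_image_left, Set.image2_image_right, Set.image_image2]
    simp_rw [monomial_mul, one_mul]

theorem mem_span_monomial_image_of_mul_monomial_mem {S T : Set (σ →₀ ℕ)} {μ : σ →₀ ℕ}
    (hST : ∀ c, ∀ d ∈ S, d ≤ c + μ → ∃ e ∈ T, e ≤ c) {f : MvPolynomial σ R}
    (hf : f * monomial μ 1 ∈ Ideal.span ((monomial · (1 : R)) '' S)) :
    f ∈ Ideal.span ((monomial · (1 : R)) '' T) := by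
  rw [mem_ideal_span_monomial_image] at hf ⊢
  intro c hc
  obtain ⟨d, hd, hdc⟩ := hf (c + μ) (by
    rw [mem_support_iff, coeff_mul_monomial, mul_one]; exact mem_support_iff.mp hc)
  exact hST c d hd hdc

end MvPolynomial

theorem exists_le_mem_minimalMonomialGens (I : Ideal (MvPolynomial (Fin n) K)) {d : Fin n →₀ ℕ}
    (hd : monomial d (1 : K) ∈ I) : ∃ e ≤ d, monomial e (1 : K) ∈ minimalMonomialGens I := by
  obtain ⟨e, ⟨hed, heI⟩, hmin⟩ :=
    wellFounded_lt.has_min {c : Fin n →₀ ℕ | c ≤ d ∧ monomial c (1 : K) ∈ I} ⟨d, le_rfl, hd⟩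
  refine ⟨e, hed, ⟨e, rfl⟩, heI, ?_⟩
  rintro _ ⟨c, rfl⟩ hcI hce
  have hce := monomial_one_dvd_monomial_one.mp hce
  rw [hce.eq_of_not_lt (hmin c ⟨hce.trans hed, hcI⟩)]

theorem IsMonomialIdeal.eq_span_minimalMonomialGens {I : Ideal (MvPolynomial (Fin n) K)}
    (hI : IsMonomialIdeal I) :
    I = Ideal.span ((monomial · (1 : K)) '' {d | monomial d (1 : K) ∈ minimalMonomialGens I}) := by
  refine le_antisymm ?_ (Ideal.span_le.mpr ?_)
  · obtain ⟨S, rfl⟩ := hI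
    refine Ideal.span_le.mpr ?_
    rintro _ ⟨d, hd, rfl⟩
    obtain ⟨e, hed, he⟩ := exists_le_mem_minimalMonomialGens _
      (Ideal.subset_span (Set.mem_image_of_mem (monomial · (1 : K)) hd))
    obtain ⟨g, hg⟩ := (monomial_one_dvd_monomial_one (R := K)).mpr hed
    show monomial d (1 : K) ∈ _
    rw [hg]
    exact Ideal.mul_mem_right _ _ (Ideal.subset_span ⟨e, he, rfl⟩)
  · rintro _ ⟨d, hd, rfl⟩
    exact hd.2.1

theorem colon_power_eq_general (I : Ideal (MvPolynomial (Fin n) K)) (hI : IsMonomialIdeal I)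
    (i j : Fin n) (hij : i ≠ j) (p q : ℕ)
    (hgen : (X i ^ p * X j ^ q : MvPolynomial (Fin n) K) ∈ minimalMonomialGens I)
    (h1 : ∀ f ∈ minimalMonomialGens I, f ≠ X i ^ p * X j ^ q → ¬ (X j ∣ f))
    (h2 : ∀ f ∈ minimalMonomialGens I, (X i ∣ f) → (X i ^ p ∣ f))
    (t : ℕ) (ht : 2 ≤ t) :
    (I ^ t).colon (Ideal.span {(X i ^ p * X j ^ q : MvPolynomial (Fin n) K)}) = I ^ (t - 1) := by
  have hμ : (X i ^ p * X j ^ q : MvPolynomial (Fin n) K) =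
      monomial (Finsupp.single i p + Finsupp.single j q) 1 := by
    rw [X_pow_eq_monomial, X_pow_eq_monomial, monomial_mul, one_mul]
  set G := {d | monomial d (1 : K) ∈ minimalMonomialGens I}
  have hj (d) (hd : d ∈ G) (hne : d ≠ Finsupp.single i p + Finsupp.single j q) : d j = 0 := by
    by_contra hdj
    refine h1 _ hd (by rwa [hμ, Ne, (monomial_left_injective one_ne_zero).eq_iff]) ?_
    exact X_dvd_monomial.mpr (Or.inr hdj)
  have hi (d) (hd : d ∈ G) (hdi : d i ≠ 0) : p ≤ d i := by
    have hdvd := h2 _ hd (X_dvd_monomial.mpr (Or.inr hdi))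
    rw [X_pow_eq_monomial, monomial_one_dvd_monomial_one] at hdvd
    simpa using Finsupp.single_le_iff.mp hdvd
  obtain ⟨t, rfl⟩ : ∃ s, t = s + 1 := ⟨t - 1, by omega⟩
  refine le_antisymm (fun f hf => ?_) (fun f hf => ?_)
  · rw [Submodule.mem_colon_span_singleton, smul_eq_mul, hμ, hI.eq_span_minimalMonomialGens,
      span_monomial_image_pow] at hf
    rw [Nat.add_sub_cancel, hI.eq_span_minimalMonomialGens, span_monomial_image_pow]
    exact mem_span_monomial_image_of_mul_monomial_mem
      (fun c d hd hdc => Finsupp.exists_mem_nsmul_le_of_mem_succ_nsmul hij hj hi hd hdc) hf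
  · rw [Submodule.mem_colon_span_singleton, smul_eq_mul, pow_succ]
    exact Ideal.mul_mem_mul hf hgen.2.1

/-- Lemma 2.1: let `I` be a monomial ideal and `x^p y^q ∈ 𝒢(I)` with
`p, q ≥ 1` and `x = X i`, `y = X j` distinct variables.  If every `f ∈ 𝒢(I)` satisfies
(1) `f ≠ x^p y^q → y ∤ f` and (2) `x ∣ f → deg_x f ≥ p`, then `(I^t : x^p y^q) = I^{t-1}`
for all `t ≥ 2`. -/
theorem colon_power_eq (I : Ideal (MvPolynomial (Fin n) K)) (hI : IsMonomialIdeal I)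
    (i j : Fin n) (hij : i ≠ j) (p q : ℕ) (hp : 1 ≤ p) (hq : 1 ≤ q)
    (hgen : (X i ^ p * X j ^ q : MvPolynomial (Fin n) K) ∈ minimalMonomialGens I)
    (h1 : ∀ f ∈ minimalMonomialGens I, f ≠ X i ^ p * X j ^ q → ¬ (X j ∣ f))
    (h2 : ∀ f ∈ minimalMonomialGens I, (X i ∣ f) → (X i ^ p ∣ f))
    (t : ℕ) (ht : 2 ≤ t) :
    (I ^ t).colon (Ideal.span {(X i ^ p * X j ^ q : MvPolynomial (Fin n) K)}) = I ^ (t - 1) :=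
  colon_power_eq_general I hI i j hij p q hgen h1 h2 t ht
end
end

section
/- Let G_ω be an increasing weighted tree with vertex set {x_1,…,x_n}, n ≥ 2, and let I(G_ω) ⊆ R = K[x_1,…,x_n] be its weighted edge ideal. Then the maximal graded ideal 𝔪 = (x_1,…,x_n) is not an associated prime of I(G_ω)^t for any t ≥ 1. -/
open SimpleGraph

noncomputable section

variable {V : Type*}

open MvPolynomial

/-- The weighted edge ideal `I(G_ω) = ((x_i x_j)^{ω(x_i x_j)} ∣ x_i x_j ∈ E(G))`. -/
def weightedEdgeIdeal (n : ℕ) (K : Type*) [Field K]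
    (G : SimpleGraph (Fin n)) (ω : Fin n → Fin n → ℕ) : Ideal (MvPolynomial (Fin n) K) :=
  Ideal.span {f | ∃ i j : Fin n, G.Adj i j ∧ f = (X i * X j) ^ ω i j}

/-- The maximal graded ideal `𝔪 = (x_1, …, x_n)`. -/
def maxGradedIdeal (n : ℕ) (K : Type*) [Field K] : Ideal (MvPolynomial (Fin n) K) :=
  Ideal.span (Set.range (X : Fin n → MvPolynomial (Fin n) K))

/-- `μ(x) = max { ω(xy) ∣ y ∈ N_G(x) }`. -/
def muWt (G : SimpleGraph V) (ω : V → V → ℕ) (x : V) : ℕ :=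
  sSup {w | ∃ y, G.Adj x y ∧ w = ω x y}

/-!
Root the tree at `v`: every edge is `{c, par c}` for a unique `c ≠ v`, and its weight
`ω c (par c)` increases towards `v`. A monomial `x^D` lies in `I(G_ω)^t` iff some `t` edges,
counted with multiplicity, have total exponent (`load`) at most `D`; call such a choice a
certificate. If `𝔪` were associated to `I^t`, some `x^D ∉ I^t` would satisfy `x_i x^D ∈ I^t` for
all `i`; induction on the tree rules this out. Take a leaf `l` of minimal weight `w`. Either the
certificate for `x_l x^D` already serves `x^D`, or `D_l = (κ + 1) w - 1` and
`D_{par l} ≥ (κ + 1) w`. Then a certificate for `x_i x^D`, `i ≠ l`, uses at most `κ` copies of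
the edge at `l`; as all edges at `par l` weigh at least `w`, it can be traded for a certificate
of `t - κ` edges avoiding `l` below `D - κ w e_{par l}`. By induction such a certificate exists
for `D - κ w e_{par l}` itself, and adding `κ` copies of the leaf edge gives one for `x^D`.
-/

section FiniteSums

variable {ι M : Type*} [Fintype ι]

theorem sum_tsub_single_smul_add [DecidableEq ι] [AddCommMonoid M] {y : ι → ℕ} {i : ι}
    (hi : y i ≠ 0) (f : ι → M) :
    ∑ j, (y - Pi.single i 1 : ι → ℕ) j • f j + f i = ∑ j, y j • f j := by
  have hle : Pi.single i 1 ≤ y := fun j => by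
    by_cases hji : j = i
    · subst hji; simpa using Nat.one_le_iff_ne_zero.mpr hi
    · simp [hji]
  conv_rhs => rw [← tsub_add_cancel_of_le hle]
  simp [add_smul, Finset.sum_add_distrib]

theorem exists_le_sum_eq_of_le_sum {y : ι → ℕ} {t : ℕ} (h : t ≤ ∑ i, y i) :
    ∃ y' ≤ y, ∑ i, y' i = t := by
  classical
  induction t with
  | zero => exact ⟨0, zero_le, by simp⟩
  | succ t ih =>
    obtain ⟨y', hle, hsum⟩ := ih (by omega)
    obtain ⟨i, hi⟩ : ∃ i, y' i < y i := by
      by_contra! hy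
      have := Finset.sum_le_sum fun i (_ : i ∈ Finset.univ) => hy i
      omega
    refine ⟨y' + Pi.single i 1, fun j => ?_, by simp [Finset.sum_add_distrib, hsum]⟩
    by_cases hji : j = i
    · subst hji; simpa using hi
    · simpa [hji] using hle j

theorem exists_le_sum_le_add_of_sum_mul_le (g : ι → ℕ) (w T m : ℕ) {y : ι → ℕ}
    (hg : ∀ i, y i ≠ 0 → g i ≠ 0 → w ≤ g i) (h : ∑ i, y i * g i ≤ T + m * w) :
    ∃ y' ≤ y, ∑ i, y i ≤ ∑ i, y' i + m ∧ ∑ i, y' i * g i ≤ T := by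
  classical
  induction m generalizing y with
  | zero => exact ⟨y, le_rfl, by omega, by simpa using h⟩
  | succ m ih =>
    by_cases hT : ∑ i, y i * g i ≤ T
    · exact ⟨y, le_rfl, by omega, hT⟩
    obtain ⟨i, -, hi⟩ := Finset.exists_ne_zero_of_sum_ne_zero (by omega : ∑ i, y i * g i ≠ 0)
    have hyi : y i ≠ 0 := left_ne_zero_of_mul hi
    have hsum := sum_tsub_single_smul_add hyi (fun _ => 1)
    have hsum_mul := sum_tsub_single_smul_add hyi g
    simp only [smul_eq_mul, mul_one] at hsum hsum_mul
    have hwi := hg i hyi (right_ne_zero_of_mul hi)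
    obtain ⟨y', hle, hs, hl⟩ := ih (y := y - Pi.single i 1)
      (fun j hj => hg j fun h => hj (by simp [h])) (by rw [add_mul] at h; omega)
    exact ⟨y', hle.trans tsub_le_self, by omega, hl⟩

end FiniteSums

namespace MvPolynomial

variable {σ ι R : Type*}

theorem span_monomial_image_pow_s8 [CommSemiring R] [Fintype ι] (e : ι → σ →₀ ℕ) (s : Set ι) (t : ℕ) :
    Ideal.span ((fun i => monomial (e i) (1 : R)) '' s) ^ t =
      Ideal.span ((fun d => monomial d (1 : R)) '' ((fun y : ι → ℕ => ∑ i, y i • e i) ''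
        {y | (∀ i, y i ≠ 0 → i ∈ s) ∧ ∑ i, y i = t})) := by
  classical
  rw [Set.image_image]
  induction t with
  | zero =>
    have : {y : ι → ℕ | (∀ i, y i ≠ 0 → i ∈ s) ∧ ∑ i, y i = 0} = {0} := by
      ext y
      constructor
      · rintro ⟨-, hy⟩
        funext i
        exact (Finset.sum_eq_zero_iff.mp hy) i (Finset.mem_univ i)
      · rintro rfl
        simp
    rw [pow_zero, this, Set.image_singleton]
    simp
  | succ t ih =>
    rw [pow_succ, ih, Ideal.span_mul_span']
    congr 1
    ext f
    simp only [Set.mem_mul, Set.mem_image, Set.mem_ofPred_eq]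
    constructor
    · rintro ⟨_, ⟨y, ⟨hys, hyt⟩, rfl⟩, _, ⟨i, hi, rfl⟩, rfl⟩
      refine ⟨y + Pi.single i 1, ⟨fun j hj => ?_, ?_⟩, ?_⟩
      · by_cases hji : j = i
        · exact hji ▸ hi
        · exact hys j (by simpa [hji] using hj)
      · simp [Finset.sum_add_distrib, hyt]
      · simp [add_smul, Finset.sum_add_distrib, monomial_mul]
    · rintro ⟨y, ⟨hys, hyt⟩, rfl⟩
      obtain ⟨i, -, hi⟩ := Finset.exists_ne_zero_of_sum_ne_zero (hyt.trans_ne t.succ_ne_zero)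
      refine ⟨_, ⟨y - Pi.single i 1, ⟨fun j hj => hys j fun h => hj (by simp [h]), ?_⟩, rfl⟩,
        _, ⟨i, hys i hi, rfl⟩, ?_⟩
      · have := sum_tsub_single_smul_add hi fun _ => 1
        simp only [smul_eq_mul, mul_one] at this
        omega
      · rw [monomial_mul, one_mul, sum_tsub_single_smul_add hi]

theorem exists_exponent_of_maxIdeal_mem_associatedPrimes [CommRing R] [IsNoetherianRing R]
    [Finite σ] (S : Set (σ →₀ ℕ))
    (h : Ideal.span (Set.range X) ∈ associatedPrimes (MvPolynomial σ R)
      (MvPolynomial σ R ⧸ Ideal.span ((fun s => monomial s (1 : R)) '' S))) :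
    ∃ D, (∀ s ∈ S, ¬s ≤ D) ∧ ∀ i, ∃ s ∈ S, s ≤ D + Finsupp.single i 1 := by
  obtain ⟨hprime, q, hann⟩ := isAssociatedPrime_iff.mp h
  obtain ⟨f, rfl⟩ := Ideal.Quotient.mk_surjective q
  have hf : f ∉ Ideal.span ((fun s => monomial s (1 : R)) '' S) := by
    intro hf
    apply hprime.ne_top
    rw [hann, Ideal.Quotient.eq_zero_iff_mem.mpr hf]
    ext r
    simp [Submodule.mem_colon_singleton]
  have hXf (i : σ) : X i * f ∈ Ideal.span ((fun s => monomial s (1 : R)) '' S) := by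
    have hXi : X i ∈ Ideal.span (Set.range (X : σ → MvPolynomial σ R)) :=
      Ideal.subset_span ⟨i, rfl⟩
    rw [hann, Submodule.mem_colon_singleton, Submodule.mem_bot] at hXi
    exact Ideal.Quotient.eq_zero_iff_mem.mp (by rwa [map_mul])
  simp only [mem_ideal_span_monomial_image, not_forall, not_exists, not_and] at hf hXf
  obtain ⟨D, hD, hDS⟩ := hf
  refine ⟨D, hDS, fun i => add_comm D _ ▸ hXf i _ ?_⟩
  simpa [mem_support_iff] using hD

end MvPolynomial

namespace WeightedForest

variable {α : Type*} (par : α → α) (wt : α → ℕ)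

def edgeVec (c : α) : α →₀ ℕ :=
  Finsupp.single c (wt c) + Finsupp.single (par c) (wt c)

def load [Fintype α] (y : α → ℕ) : α →₀ ℕ :=
  ∑ c, y c • edgeVec par wt c

/-- `x^d` is divisible by a product of at least `t` of the monomials `x^{edgeVec c}` with
`c ∈ A \ {v}`; the edge `c` joins `c` to `par c` and has weight `wt c`. Since `load` is monotone,
"at least" is equivalent to "exactly", and it makes a truncated `t - κ` harmless. -/
def MemEdgePow [Fintype α] (v : α) (A : Finset α) (t : ℕ) (d : α →₀ ℕ) : Prop :=
  ∃ y : α → ℕ, (∀ x, y x ≠ 0 → x ∈ A ∧ x ≠ v) ∧ t ≤ ∑ x, y x ∧ load par wt y ≤ d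

variable {par wt}

theorem edgeVec_apply [DecidableEq α] (c z : α) :
    edgeVec par wt c z = (if c = z then wt c else 0) + if par c = z then wt c else 0 := by
  simp [edgeVec, Finsupp.single_apply]

theorem le_edgeVec_apply {c z : α} (h : edgeVec par wt c z ≠ 0) :
    wt c ≤ edgeVec par wt c z := by
  classical
  rw [edgeVec_apply] at h ⊢
  split_ifs at h ⊢ <;> omega

section Load

variable [Fintype α]

theorem load_apply (y : α → ℕ) (z : α) :
    load par wt y z = ∑ c, y c * edgeVec par wt c z := by
  simp [load, Finsupp.finsetSum_apply]

theorem load_add (y y' : α → ℕ) : load par wt (y + y') = load par wt y + load par wt y' := by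
  simp [load, add_smul, Finset.sum_add_distrib]

theorem load_mono {y y' : α → ℕ} (h : y ≤ y') : load par wt y ≤ load par wt y' :=
  Finset.sum_le_sum fun c _ => nsmul_le_nsmul_left zero_le (h c)

theorem load_single [DecidableEq α] (c : α) (m : ℕ) :
    load par wt (Pi.single c m) = m • edgeVec par wt c := by
  simp [load, Pi.single_apply, ite_smul]

theorem load_apply_of_forall_par_ne {y : α → ℕ} {l : α} (h : ∀ x, y x ≠ 0 → par x ≠ l) :
    load par wt y l = y l * wt l := by
  classical
  rw [load_apply, Finset.sum_eq_single l]
  · by_cases hl : y l = 0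
    · simp [hl]
    · simp [edgeVec_apply, h l hl]
  · intro c _ hcl
    by_cases hc : y c = 0
    · simp [hc]
    · simp [edgeVec_apply, hcl, h c hc]
  · simp

theorem mul_le_load_apply_par (y : α → ℕ) (c : α) : y c * wt c ≤ load par wt y (par c) := by
  classical
  rw [load_apply]
  refine le_trans ?_ (Finset.single_le_sum (fun _ _ => zero_le) (Finset.mem_univ c))
  exact Nat.mul_le_mul_left _ (by simp [edgeVec_apply])

end Load

theorem exists_leaf_of_minimal_weight [DecidableEq α] {v : α} {A : Finset α} (rk : α → ℕ)
    (hrk : ∀ x ∈ A, x ≠ v → rk (par x) < rk x)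
    (hinc : ∀ x ∈ A, x ≠ v → par x ≠ v → wt x ≤ wt (par x)) (hA : (A.erase v).Nonempty) :
    ∃ l ∈ A, l ≠ v ∧ (∀ x ∈ A, x ≠ v → wt l ≤ wt x) ∧ ∀ c ∈ A, c ≠ v → par c ≠ l := by
  obtain ⟨b, hb, hbmin⟩ := (A.erase v).exists_min_image wt hA
  obtain ⟨l, hl, hlmax⟩ :=
    ((A.erase v).filter (wt · = wt b)).exists_max_image rk ⟨b, Finset.mem_filter.mpr ⟨hb, rfl⟩⟩
  simp only [Finset.mem_filter, Finset.mem_erase, and_imp] at hb hbmin hl hlmax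
  refine ⟨l, hl.1.2, hl.1.1, fun x hx hxv => hl.2 ▸ hbmin x hxv hx, fun c hc hcv hcl => ?_⟩
  have hwc : wt c = wt b :=
    le_antisymm (hl.2 ▸ hcl ▸ hinc c hc hcv (hcl ▸ hl.1.1)) (hbmin c hcv hc)
  have := hlmax c hcv hc hwc
  have := hcl ▸ hrk c hc hcv
  omega

section Induction

variable [Fintype α] [DecidableEq α] {v l : α} {A : Finset α} {t κ : ℕ} {d : α →₀ ℕ}

theorem memEdgePow_or_exists_of_add_single_leaf (hlA : l ∈ A) (hl : l ≠ v)
    (hleaf : ∀ c ∈ A, c ≠ v → par c ≠ l) (h : MemEdgePow par wt v A t (d + Finsupp.single l 1)) :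
    MemEdgePow par wt v A t d ∨
      ∃ κ, κ * wt l ≤ d l ∧ d l < (κ + 1) * wt l ∧ (κ + 1) * wt l ≤ d (par l) := by
  obtain ⟨y, hys, hyt, hle⟩ := h
  have hload : load par wt y l = y l * wt l :=
    load_apply_of_forall_par_ne fun x hx => hleaf x (hys x hx).1 (hys x hx).2
  have hlu : par l ≠ l := hleaf l hlA hl
  by_cases hk : y l * wt l ≤ d l
  · refine Or.inl ⟨y, hys, hyt, fun z => ?_⟩
    by_cases hz : z = l
    · subst hz; rw [hload]; exact hk
    · simpa [Finsupp.single_apply, Ne.symm hz] using hle z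
  · have hl1 : y l * wt l ≤ d l + 1 := by simpa [hload] using hle l
    have hu : y l * wt l ≤ d (par l) := by
      simpa [hlu] using (mul_le_load_apply_par y l).trans (hle (par l))
    obtain ⟨κ, hκ⟩ := Nat.exists_eq_succ_of_ne_zero (by rintro h0; simp [h0] at hk : y l ≠ 0)
    have hw : wt l ≠ 0 := by rintro h0; simp [h0] at hk
    rw [hκ, Nat.succ_mul] at hk hl1 hu
    exact Or.inr ⟨κ, by omega, by rw [add_one_mul]; omega, by rw [add_one_mul]; omega⟩

theorem MemEdgePow.erase_leaf (hl : l ≠ v) (hleaf : ∀ c ∈ A, c ≠ v → par c ≠ l)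
    (hmin : ∀ x ∈ A, x ≠ v → wt l ≤ wt x) (hdl : d l < (κ + 1) * wt l)
    (h : MemEdgePow par wt v A t d) :
    MemEdgePow par wt v (A.erase l) (t - κ) (d - Finsupp.single (par l) (κ * wt l)) := by
  obtain ⟨y, hys, hyt, hle⟩ := h
  set u := par l
  set y₀ := Function.update y l 0
  have hy : y₀ + Pi.single l (y l) = y := by
    funext z
    by_cases hz : z = l
    · subst hz; simp [y₀]
    · simp [y₀, hz]
  have hyl : y l ≤ κ := by
    have := (load_apply_of_forall_par_ne (wt := wt)
      fun x hx => hleaf x (hys x hx).1 (hys x hx).2).symm.trans_le (hle l)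
    exact Nat.lt_succ_iff.mp (Nat.lt_of_mul_lt_mul_right (this.trans_lt hdl))
  have hsum : ∑ x, y x = ∑ x, y₀ x + y l := by
    conv_lhs => rw [← hy]
    simp [Finset.sum_add_distrib]
  have hload : load par wt y = load par wt y₀ + y l • edgeVec par wt l := by
    conv_lhs => rw [← hy]
    rw [load_add, load_single]
  have hy₀ {x} (hx : y₀ x ≠ 0) : x ≠ l ∧ y x ≠ 0 := by
    by_cases hxl : x = l
    · simp [y₀, hxl] at hx
    · simpa [y₀, hxl] using hx
  have hu : load par wt y₀ u + y l * wt l ≤ d u := by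
    refine le_trans ?_ (hle u)
    rw [hload, Finsupp.add_apply, Finsupp.smul_apply, smul_eq_mul]
    exact Nat.add_le_add_left (Nat.mul_le_mul_left _ (by simp [u, edgeVec_apply])) _
  have hκw : y l * wt l ≤ κ * wt l := Nat.mul_le_mul_right _ hyl
  obtain ⟨y', hy', hsum', hload'⟩ := exists_le_sum_le_add_of_sum_mul_le
    (fun c => edgeVec par wt c u) (wt l) (d u - κ * wt l) (κ - y l) (y := y₀)
    (fun c hc hcu => by
      obtain ⟨-, hyc⟩ := hy₀ hc
      exact (hmin c (hys c hyc).1 (hys c hyc).2).trans (le_edgeVec_apply hcu))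
    (by rw [← load_apply, Nat.sub_mul]; omega)
  refine ⟨y', fun x hx => ?_, by omega, fun z => ?_⟩
  · obtain ⟨hxl, hyx⟩ := hy₀ fun h0 => hx (Nat.le_zero.mp (h0 ▸ hy' x))
    exact ⟨Finset.mem_erase.mpr ⟨hxl, (hys x hyx).1⟩, (hys x hyx).2⟩
  · by_cases hz : z = u
    · subst hz
      simpa [load_apply] using hload'
    · have : load par wt y' z ≤ load par wt y z :=
        (load_mono hy' z).trans ((hload ▸ le_self_add : load par wt y₀ ≤ load par wt y) z)
      simpa [Finsupp.single_apply, Ne.symm hz] using this.trans (hle z)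

theorem MemEdgePow.of_erase_leaf (hlA : l ∈ A) (hl : l ≠ v)
    (hleaf : ∀ c ∈ A, c ≠ v → par c ≠ l) (hκl : κ * wt l ≤ d l) (hκu : κ * wt l ≤ d (par l))
    (h : MemEdgePow par wt v (A.erase l) (t - κ) (d - Finsupp.single (par l) (κ * wt l))) :
    MemEdgePow par wt v A t d := by
  obtain ⟨y, hys, hyt, hle⟩ := h
  have hlu : par l ≠ l := hleaf l hlA hl
  refine ⟨y + Pi.single l κ, fun x hx => ?_, ?_, fun z => ?_⟩
  · by_cases hxl : x = l
    · exact hxl ▸ ⟨hlA, hl⟩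
    · obtain ⟨hxA, hxv⟩ := hys x (by simpa [hxl] using hx)
      exact ⟨Finset.mem_of_mem_erase hxA, hxv⟩
  · simp only [Pi.add_apply, Finset.sum_add_distrib, Finset.sum_pi_single', Finset.mem_univ,
      if_true]
    omega
  · rw [load_add, load_single, Finsupp.add_apply, Finsupp.smul_apply, smul_eq_mul,
      edgeVec_apply]
    have hyz := hle z
    rw [Finsupp.tsub_apply, Finsupp.single_apply] at hyz
    by_cases hzl : z = l
    · subst hzl
      have hyz0 : y z = 0 := by_contra fun h => by simpa using (hys z h).1
      have : load par wt y z = 0 := by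
        rw [load_apply_of_forall_par_ne fun x hx => hleaf x
          (Finset.mem_of_mem_erase (hys x hx).1) (hys x hx).2, hyz0, zero_mul]
      simpa [this, hlu] using hκl
    · by_cases hzu : par l = z
      · subst hzu
        simp only [Ne.symm hlu, if_true, if_false, zero_add] at hyz ⊢
        omega
      · simp only [Ne.symm hzl, hzu, if_false, add_zero, mul_zero, tsub_zero] at hyz ⊢
        omega

theorem MemEdgePow.of_forall_add_single (rk : α → ℕ) (hv : v ∈ A)
    (hrk : ∀ x ∈ A, x ≠ v → rk (par x) < rk x)
    (hinc : ∀ x ∈ A, x ≠ v → par x ≠ v → wt x ≤ wt (par x))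
    (h : ∀ x ∈ A, MemEdgePow par wt v A t (d + Finsupp.single x 1)) :
    MemEdgePow par wt v A t d := by
  induction A using Finset.strongInduction generalizing t d with
  | H A ih =>
  rcases (A.erase v).eq_empty_or_nonempty with hA | hA
  · obtain ⟨y, hys, hyt, -⟩ := h v hv
    have hy : y = 0 := funext fun x => by_contra fun hx => by
      simpa [hA] using Finset.mem_erase.mpr ((hys x hx).symm)
    exact ⟨0, by simp, by simpa [hy] using hyt, by simp [load]⟩
  obtain ⟨l, hlA, hl, hmin, hleaf⟩ := exists_leaf_of_minimal_weight rk hrk hinc hA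
  rcases memEdgePow_or_exists_of_add_single_leaf hlA hl hleaf (h l hlA) with
    hd | ⟨κ, hκl, hdl, hκu⟩
  · exact hd
  have hκu' : κ * wt l ≤ d (par l) := le_trans (Nat.mul_le_mul_right _ κ.le_succ) hκu
  refine MemEdgePow.of_erase_leaf hlA hl hleaf hκl hκu' <| ih _ (Finset.erase_ssubset hlA)
    (Finset.mem_erase_of_ne_of_mem (Ne.symm hl) hv)
    (fun x hx => hrk x (Finset.mem_of_mem_erase hx))
    (fun x hx => hinc x (Finset.mem_of_mem_erase hx))
    fun x hx => ?_
  have hxl : x ≠ l := Finset.ne_of_mem_erase hx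
  rw [tsub_add_eq_add_tsub (Finsupp.single_le_iff.mpr hκu')]
  exact (h x (Finset.mem_of_mem_erase hx)).erase_leaf hl hleaf hmin
    (by simpa [Finsupp.single_apply, hxl] using hdl)

end Induction

end WeightedForest

namespace SimpleGraph

variable {V : Type*} {G : SimpleGraph V} {v : V} {par : V → V}

structure IsParentMap (G : SimpleGraph V) (v : V) (par : V → V) : Prop where
  map_root : par v = v
  adj : ∀ {x}, x ≠ v → G.Adj x (par x)
  dist_add_one : ∀ {x}, x ≠ v → G.dist (par x) v + 1 = G.dist x v
  eq_or_eq_of_adj : ∀ {i j}, G.Adj i j → i = par j ∨ j = par i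

theorem IsTree.exists_isParentMap (hT : G.IsTree) (v : V) : ∃ par, G.IsParentMap v par := by
  classical
  choose p hp hpu using fun x => hT.existsUnique_path x v
  have hlen (x : V) : (p x).length = G.dist x v := by
    obtain ⟨q, hq⟩ := hT.connected.exists_walk_length_eq_dist x v
    refine le_antisymm ?_ (dist_le _)
    rw [← hpu x _ q.bypass_isPath, ← hq]
    exact q.length_bypass_le_length
  refine ⟨fun x => (p x).snd, ?_, fun hx => ?_, fun hx => ?_, fun {i j} hij => ?_⟩
  · simp [← hpu v .nil Walk.IsPath.nil]
  · exact (p _).adj_snd (Walk.not_nil_of_ne hx)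
  · rw [← hlen, ← hlen, ← hpu _ _ (hp _).tail, Walk.length_tail_add_one (Walk.not_nil_of_ne hx)]
  · by_cases hj : j ∈ (p i).support
    · exact Or.inr (hT.isAcyclic.eq_snd_of_adj_start (hp i) hij hj)
    · left
      rw [← hpu j _ ((Walk.cons_isPath_iff hij.symm _).mpr ⟨hp i, hj⟩), Walk.snd_cons]

namespace IsParentMap

theorem dist_par (hpar : G.IsParentMap v par) (x : V) : G.dist (par x) v = G.dist x v - 1 := by
  by_cases hx : x = v
  · simp [hx, hpar.map_root]
  · have := hpar.dist_add_one hx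
    omega

theorem dist_iterate (hpar : G.IsParentMap v par) (x : V) (i : ℕ) :
    G.dist (par^[i] x) v = G.dist x v - i := by
  induction i with
  | zero => rfl
  | succ i ih => rw [Function.iterate_succ_apply', hpar.dist_par, ih, Nat.sub_sub]

theorem eq_of_dist_eq_zero (hpar : G.IsParentMap v par) {x : V} (h : G.dist x v = 0) :
    x = v := by
  by_contra hx
  have := hpar.dist_add_one hx
  omega

theorem exists_leaf_iterate_eq [Finite V] (hpar : G.IsParentMap v par) (x : V) :
    ∃ l m, par^[m] l = x ∧ ∀ y, G.Adj l y → y = par l := by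
  obtain ⟨l, ⟨m, hm⟩, hmax⟩ := Set.exists_max_image {l | ∃ m, par^[m] l = x} (G.dist · v)
    (Set.toFinite _) ⟨x, 0, rfl⟩
  refine ⟨l, m, hm, fun y hy => ?_⟩
  rcases hpar.eq_or_eq_of_adj hy with hly | hyl
  · have hyv : y ≠ v := by
      rintro rfl
      exact hy.ne (hly.trans hpar.map_root)
    have := hmax y ⟨m + 1, by rw [Function.iterate_succ_apply, ← hly, hm]⟩
    have := hly ▸ hpar.dist_add_one hyv
    omega
  · exact hyl

theorem weight_le_weight_par [Finite V] {ω : V → V → ℕ} (hpar : G.IsParentMap v par)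
    (hinc : ∀ (p : ℕ → V) (k : ℕ), IsSimplePathOn G p k → IsLeafVertex G (p 0) → p k = v →
      IsIncreasingPath ω p k)
    {x : V} (hx : x ≠ v) (hpx : par x ≠ v) : ω x (par x) ≤ ω (par x) (par (par x)) := by
  obtain ⟨l, m, rfl, hleaf⟩ := hpar.exists_leaf_iterate_eq x
  have hd := hpar.dist_iterate l
  have hlv : l ≠ v := by
    rintro rfl
    exact hx (Function.iterate_fixed hpar.map_root m)
  have hpath : IsSimplePathOn G (fun i => par^[i] l) (G.dist l v) := by
    refine ⟨fun i hi j hj hij => ?_, fun i hi => ?_⟩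
    · have := congrArg (G.dist · v) hij
      simp only [hd] at this
      omega
    · simp only [Function.iterate_succ_apply']
      refine hpar.adj fun h => ?_
      have := hd i
      rw [h, dist_self] at this
      omega
  have hend : par^[G.dist l v] l = v := hpar.eq_of_dist_eq_zero (by rw [hd, Nat.sub_self])
  have hm : m + 2 ≤ G.dist l v := by
    have h1 := hpar.dist_add_one hx
    have h2 := hpar.dist_add_one hpx
    have := hd m
    omega
  simpa only [Function.iterate_succ_apply'] using
    hinc _ _ hpath ⟨par l, hpar.adj hlv, hleaf⟩ hend m hm

end IsParentMap

end SimpleGraph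

theorem SimpleGraph.IsParentMap.weightedEdgeIdeal_eq {n : ℕ} {K : Type*} [Field K]
    {G : SimpleGraph (Fin n)} {ω : Fin n → Fin n → ℕ} {v : Fin n} {par : Fin n → Fin n}
    (hpar : G.IsParentMap v par) (hsym : ∀ a b, ω a b = ω b a) :
    weightedEdgeIdeal n K G ω = Ideal.span ((fun c =>
      monomial (WeightedForest.edgeVec par (fun c => ω c (par c)) c) (1 : K)) '' {c | c ≠ v}) := by
  have hpow (i j : Fin n) (w : ℕ) : (X i * X j : MvPolynomial (Fin n) K) ^ w =
      monomial (Finsupp.single i w + Finsupp.single j w) 1 := by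
    rw [mul_pow, X_pow_eq_monomial, X_pow_eq_monomial, monomial_mul, one_mul]
  have hne {c : Fin n} (hc : G.Adj c (par c)) : c ≠ v := by
    rintro rfl
    exact hc.ne hpar.map_root.symm
  unfold weightedEdgeIdeal
  congr 1
  ext f
  constructor
  · rintro ⟨i, j, hij, rfl⟩
    rcases hpar.eq_or_eq_of_adj hij with rfl | rfl
    · exact ⟨j, hne hij.symm, by simp [hpow, WeightedForest.edgeVec, hsym j, add_comm]⟩
    · exact ⟨i, hne hij, by simp [hpow, WeightedForest.edgeVec]⟩
  · rintro ⟨c, hc, rfl⟩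
    exact ⟨c, par c, hpar.adj hc, by simp [hpow, WeightedForest.edgeVec]⟩

open WeightedForest

theorem maxIdeal_not_associated_general {n : ℕ} (K : Type*) [Field K]
    (G : SimpleGraph (Fin n)) (ω : Fin n → Fin n → ℕ)
    (hsym : ∀ a b, ω a b = ω b a)
    (v : Fin n) (hG : IsIncreasingWeightedTree G ω v)
    (t : ℕ) :
    maxGradedIdeal n K ∉
      associatedPrimes (MvPolynomial (Fin n) K)
        (MvPolynomial (Fin n) K ⧸ (weightedEdgeIdeal n K G ω ^ t)) := by
  obtain ⟨par, hpar⟩ := hG.1.exists_isParentMap v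
  intro hass
  rw [hpar.weightedEdgeIdeal_eq hsym, span_monomial_image_pow_s8] at hass
  obtain ⟨D, hD, hDx⟩ := exists_exponent_of_maxIdeal_mem_associatedPrimes _ hass
  obtain ⟨y, hys, hyt, hle⟩ : MemEdgePow par (fun c => ω c (par c)) v Finset.univ t D :=
    MemEdgePow.of_forall_add_single (G.dist · v) (Finset.mem_univ v)
      (fun x _ hx => by have := hpar.dist_add_one hx; omega)
      (fun x _ hx hpx => hpar.weight_le_weight_par hG.2 hx hpx) fun x _ => by
        obtain ⟨_, ⟨y, ⟨hys, hyt⟩, rfl⟩, hle⟩ := hDx x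
        exact ⟨y, fun c hc => ⟨Finset.mem_univ c, hys c hc⟩, hyt.ge, hle⟩
  obtain ⟨y', hy', rfl⟩ := exists_le_sum_eq_of_le_sum hyt
  refine hD _ ⟨y', ⟨fun c hc => (hys c fun h => hc ?_).2, rfl⟩, rfl⟩ ((load_mono hy').trans hle)
  simpa [h] using hy' c

/-- Lemma 2.2: if `G_ω` is an increasing weighted tree on the vertex set
`{x_1, …, x_n}`, `n ≥ 2`, then the maximal graded ideal `𝔪 = (x_1, …, x_n)` is not an
associated prime of `I(G_ω)^t` for any `t ≥ 1`. -/
theorem maxIdeal_not_associated {n : ℕ} (hn : 2 ≤ n) (K : Type*) [Field K]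
    (G : SimpleGraph (Fin n)) (ω : Fin n → Fin n → ℕ)
    (hsym : ∀ a b, ω a b = ω b a) (hpos : ∀ a b, G.Adj a b → 0 < ω a b)
    (v : Fin n) (hG : IsIncreasingWeightedTree G ω v)
    (t : ℕ) (ht : 1 ≤ t) :
    maxGradedIdeal n K ∉
      associatedPrimes (MvPolynomial (Fin n) K)
        (MvPolynomial (Fin n) K ⧸ (weightedEdgeIdeal n K G ω ^ t)) :=
  maxIdeal_not_associated_general K G ω hsym v hG t
end
end

section
/- Let (G_ω, v) be an increasing weighted tree with vertex set {x_1,…,x_n}, let I(G_ω) ⊆ R = K[x_1,…,x_n] be its weighted edge ideal, and let m ≥ μ(v), where μ(v) = max{ω(vy) ∣ y ∈ N_G(v)}. Then Ass((v^m, I(G_ω))^t) ⊆ Ass((v^m, I(G_ω))^{t+1}) for all t ≥ 1. -/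
/-!
Every edge lies on a path from some leaf `ℓ ≠ v` to `v`, and that path is increasing, so a leaf
edge `ℓz` (with `ℓ ≠ v`) of minimal weight `w` has minimal weight among all edges; in particular
`w ≤ μ(v) ≤ m`. Hence `x^u = (x_ℓ x_z)^w` is a generator of `I = (v^m, I(G_ω))` such that no other
generator involves `x_ℓ` and every generator involving `x_z` does so with exponent at least `w`
(without edges, `x^u = v^m` works). For such a generator `(I^(t+1) : x^u) = I^t`: a product of
`t + 1` generators dividing `x^u x^e` contains `x^u`, or a factor involving `x_z`, or avoids `x_ℓ`
and `x_z` altogether, and dropping that factor leaves a product of `t` generators dividing `x^e`.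
So multiplication by `x^u` embeds `R/I^t` into `R/I^(t+1)`, and associated primes of a submodule
are associated primes of the module.
-/

open SimpleGraph

noncomputable section

variable {V : Type*}

open MvPolynomial

namespace SimpleGraph

variable {G : SimpleGraph V}

lemma Walk.IsPath.isSimplePathOn {u w : V} {p : G.Walk u w} (hp : p.IsPath) :
    IsSimplePathOn G p.getVert p.length :=
  ⟨fun _ hi _ hj h => hp.getVert_injOn hi hj h, fun _ hi => p.adj_getVert_succ hi⟩

lemma IsTree.exists_leaf_isPath_mem_edges [Fintype V] (hT : G.IsTree) {a b : V}
    (hab : G.Adj a b) (v : V) :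
    ∃ ℓ, ∃ Q : G.Walk ℓ v, Q.IsPath ∧ IsLeafVertex G ℓ ∧ s(a, b) ∈ Q.edges := by
  set S : Set ℕ := {k | ∃ x, ∃ Q : G.Walk x v, Q.IsPath ∧ s(a, b) ∈ Q.edges ∧ Q.length = k}
  have hS : S.Nonempty := by
    obtain ⟨W, hW⟩ := hT.connected.exists_isPath a v
    by_cases hb : b ∈ W.support
    · have hbs := hT.isAcyclic.eq_snd_of_adj_start hW hab hb
      have hnil : ¬ W.Nil := by
        cases W with
        | nil => exact absurd (by simpa using hb) hab.ne'
        | cons => exact Walk.not_nil_cons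
      exact ⟨_, a, W, hW, hbs ▸ W.mk_start_snd_mem_edges hnil, rfl⟩
    · exact ⟨_, b, W.cons hab.symm, hW.cons hb, by simp [Sym2.eq_swap], rfl⟩
  -- a longest path to `v` through the edge starts at a leaf
  have hSbdd : BddAbove S := ⟨Fintype.card V, by
    rintro _ ⟨x, Q, hQ, -, rfl⟩; exact hQ.length_lt.le⟩
  obtain ⟨ℓ, Q, hQ, he, hlen⟩ := Nat.sSup_mem hS hSbdd
  have hnil : ¬ Q.Nil := fun h => by simp [Walk.edges_eq_nil.2 h] at he
  refine ⟨ℓ, Q, hQ, ⟨Q.snd, Q.adj_snd hnil, fun y hy => ?_⟩, he⟩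
  refine hT.isAcyclic.eq_snd_of_adj_start hQ hy (by_contra fun hy' => ?_)
  have : (Q.cons hy.symm).length ∈ S := ⟨y, _, hQ.cons hy', by simp [he], rfl⟩
  have := le_csSup hSbdd this
  rw [Walk.length_cons, hlen] at this
  omega

end SimpleGraph

lemma le_muWt [Finite V] {G : SimpleGraph V} {ω : V → V → ℕ} {x y : V} (h : G.Adj x y) :
    ω x y ≤ muWt G ω x :=
  le_csSup ((Set.finite_range (ω x)).subset (by rintro _ ⟨y, -, rfl⟩; exact ⟨y, rfl⟩)).bddAbove
    ⟨y, h, rfl⟩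

lemma IsIncreasingPath.weight_zero_le {ω : V → V → ℕ} {p : ℕ → V} {k : ℕ}
    (h : IsIncreasingPath ω p k) {j : ℕ} (hj : j < k) : ω (p 0) (p 1) ≤ ω (p j) (p (j + 1)) := by
  induction j with
  | zero => rfl
  | succ j ih => exact (ih (by omega)).trans (h j (by omega))

namespace IsIncreasingWeightedTree

variable [Fintype V] {G : SimpleGraph V} {ω : V → V → ℕ} {v : V}

lemma exists_leaf_edge_le (hG : IsIncreasingWeightedTree G ω v) (hsym : ∀ a b, ω a b = ω b a)
    {a b : V} (hab : G.Adj a b) : ∃ ℓ y, G.Adj ℓ y ∧ IsLeafVertex G ℓ ∧ ℓ ≠ v ∧ ω ℓ y ≤ ω a b := by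
  obtain ⟨ℓ, Q, hQ, hleaf, he⟩ := hG.1.exists_leaf_isPath_mem_edges hab v
  obtain ⟨i, hi, hei⟩ := (Q.mk_mem_edges_iff_exists).1 he
  have hnil : ¬ Q.Nil := fun h => by simp [SimpleGraph.Walk.edges_eq_nil.2 h] at he
  have hinc := hG.2 Q.getVert Q.length hQ.isSimplePathOn (by simpa using hleaf) Q.getVert_length
  refine ⟨ℓ, Q.snd, Q.adj_snd hnil, hleaf, fun h => hnil (hQ.nil_iff_eq.2 h), ?_⟩
  calc ω ℓ Q.snd = ω (Q.getVert 0) (Q.getVert 1) := by simp [SimpleGraph.Walk.snd]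
    _ ≤ ω (Q.getVert i) (Q.getVert (i + 1)) := hinc.weight_zero_le hi
    _ = ω a b := by
      rcases Sym2.eq_iff.1 hei with ⟨h₁, h₂⟩ | ⟨h₁, h₂⟩
      · rw [h₁, h₂]
      · rw [h₁, h₂, hsym]

lemma exists_leaf_edge_forall_le (hG : IsIncreasingWeightedTree G ω v)
    (hsym : ∀ a b, ω a b = ω b a) (hedge : ∃ a b, G.Adj a b) :
    ∃ ℓ z, G.Adj ℓ z ∧ IsLeafVertex G ℓ ∧ ℓ ≠ v ∧ ∀ a b, G.Adj a b → ω ℓ z ≤ ω a b := by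
  classical
  obtain ⟨a, b, hab⟩ := hedge
  obtain ⟨⟨a₀, b₀⟩, h₀, hmin⟩ := (Finset.univ.filter fun e : V × V => G.Adj e.1 e.2).exists_min_image
    (fun e => ω e.1 e.2) ⟨(a, b), by simpa using hab⟩
  obtain ⟨ℓ, z, hℓz, hleaf, hℓv, hle⟩ := hG.exists_leaf_edge_le hsym (by simpa using h₀)
  exact ⟨ℓ, z, hℓz, hleaf, hℓv, fun a' b' h => hle.trans (hmin (a', b') (by simpa using h))⟩

end IsIncreasingWeightedTree

open scoped Pointwise

section KFoldSumset

variable {M : Type*} [AddCommMonoid M] (S : Set M)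

def kFoldSumset (k : ℕ) : Set M :=
  {s | ∃ g : Fin k → M, (∀ i, g i ∈ S) ∧ ∑ i, g i = s}

lemma kFoldSumset_zero : kFoldSumset S 0 = {0} := by
  ext s; simp [kFoldSumset, eq_comm]

lemma kFoldSumset_succ (k : ℕ) :
    kFoldSumset S (k + 1) = kFoldSumset S k + S := by
  ext s
  constructor
  · rintro ⟨g, hg, rfl⟩
    exact ⟨_, ⟨_, fun i => hg _, rfl⟩, _, hg (Fin.last k), (Fin.sum_univ_castSucc g).symm⟩
  · rintro ⟨_, ⟨g, hg, rfl⟩, a, ha, rfl⟩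
    refine ⟨Fin.snoc g a, fun i => Fin.lastCases (by simpa) (fun j => by simpa using hg j) i, ?_⟩
    simp [Fin.sum_univ_castSucc]

end KFoldSumset

section MonomialIdeal

variable {σ R : Type*}

lemma MvPolynomial.span_monomial_one_image_pow [CommSemiring R] (S : Set (σ →₀ ℕ)) (k : ℕ) :
    Ideal.span ((fun s => monomial s (1 : R)) '' S) ^ k =
      Ideal.span ((fun s => monomial s (1 : R)) '' kFoldSumset S k) := by
  induction k with
  | zero => simp [kFoldSumset_zero, Ideal.one_eq_top]
  | succ k ih =>
    rw [pow_succ, ih, Ideal.span_mul_span', kFoldSumset_succ, ← Set.image2_add, ← Set.image2_mul,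
      Set.image_image2_distrib]
    intro a b
    simp [monomial_mul]

def IsPeelable (S : Set (σ →₀ ℕ)) (u : σ →₀ ℕ) : Prop :=
  ∃ ℓ z, (∀ x, x ≠ ℓ → x ≠ z → u x = 0) ∧ (∀ g ∈ S, g ≠ u → g ℓ = 0) ∧
    ∀ g ∈ S, g z ≠ 0 → u z ≤ g z

lemma IsPeelable.exists_mem_kFoldSumset_le {S : Set (σ →₀ ℕ)} {u : σ →₀ ℕ} (hu : IsPeelable S u)
    {k : ℕ} {s e : σ →₀ ℕ} (hs : s ∈ kFoldSumset S (k + 1)) (hle : s ≤ u + e) :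
    ∃ s' ∈ kFoldSumset S k, s' ≤ e := by
  obtain ⟨ℓ, z, hsupp, hℓ, hz⟩ := hu
  obtain ⟨g, hg, rfl⟩ := hs
  suffices ∃ i, ∀ x, u x ≤ g i x ∨ (∑ j, g j) x = 0 by
    obtain ⟨i, hi⟩ := this
    refine ⟨∑ j, g (i.succAbove j), ⟨_, fun j => hg _, rfl⟩, fun x => ?_⟩
    have hx := hle x
    have hix := hi x
    rw [Fin.sum_univ_succAbove g i] at hx hix
    simp only [Finsupp.add_apply] at hx hix
    omega
  by_cases hui : ∃ i, g i = u
  · obtain ⟨i, rfl⟩ := hui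
    exact ⟨i, fun x => Or.inl le_rfl⟩
  push Not at hui
  have hsum_eq_zero : ∀ x, (∀ i, g i x = 0) → (∑ j, g j) x = 0 := fun x h => by
    simp [Finsupp.finsetSum_apply, h]
  have key : ∀ i, (u z ≤ g i z ∨ (∑ j, g j) z = 0) → ∀ x, u x ≤ g i x ∨ (∑ j, g j) x = 0 := by
    intro i hi x
    by_cases hxℓ : x = ℓ
    · exact Or.inr (hxℓ ▸ hsum_eq_zero ℓ fun j => hℓ _ (hg j) (hui j))
    by_cases hxz : x = z
    · exact hxz ▸ hi
    exact Or.inl (by simp [hsupp x hxℓ hxz])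
  by_cases hzi : ∃ i, g i z ≠ 0
  · obtain ⟨i, hi⟩ := hzi
    exact ⟨i, key i (Or.inl (hz _ (hg i) hi))⟩
  · push Not at hzi
    exact ⟨0, key 0 (Or.inr (hsum_eq_zero z hzi))⟩

lemma IsPeelable.mem_pow_of_monomial_mul_mem_pow_succ [CommSemiring R] {S : Set (σ →₀ ℕ)}
    {u : σ →₀ ℕ} (hu : IsPeelable S u) {k : ℕ} {f : MvPolynomial σ R}
    (hf : monomial u 1 * f ∈ Ideal.span ((fun s => monomial s (1 : R)) '' S) ^ (k + 1)) :
    f ∈ Ideal.span ((fun s => monomial s (1 : R)) '' S) ^ k := by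
  rw [span_monomial_one_image_pow, mem_ideal_span_monomial_image] at hf ⊢
  intro d hd
  have hud : u + d ∈ (monomial u 1 * f).support := by
    rwa [mem_support_iff, coeff_monomial_mul, one_mul, ← mem_support_iff]
  obtain ⟨s, hs, hle⟩ := hf (u + d) hud
  exact hu.exists_mem_kFoldSumset_le hs hle

end MonomialIdeal

def weightedEdgeExponents (G : SimpleGraph V) (ω : V → V → ℕ) : Set (V →₀ ℕ) :=
  {d | ∃ i j, G.Adj i j ∧ d = Finsupp.single i (ω i j) + Finsupp.single j (ω i j)}

lemma span_X_pow_sup_weightedEdgeIdeal {n : ℕ} (K : Type*) [Field K] (G : SimpleGraph (Fin n))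
    (ω : Fin n → Fin n → ℕ) (v : Fin n) (m : ℕ) :
    Ideal.span {(X v : MvPolynomial (Fin n) K) ^ m} ⊔ weightedEdgeIdeal n K G ω =
      Ideal.span ((fun s => monomial s (1 : K)) ''
        insert (Finsupp.single v m) (weightedEdgeExponents G ω)) := by
  rw [Set.image_insert_eq, Ideal.span_insert, X_pow_eq_monomial, weightedEdgeIdeal]
  congr 2
  ext f
  simp [weightedEdgeExponents, mul_pow, X_pow_eq_monomial, monomial_mul, eq_comm]

lemma isPeelable_of_forall_not_adj {G : SimpleGraph V} {ω : V → V → ℕ} (hG : ∀ a b, ¬ G.Adj a b)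
    (v : V) (m : ℕ) :
    IsPeelable (insert (Finsupp.single v m) (weightedEdgeExponents G ω)) (Finsupp.single v m) := by
  have hS : ∀ g ∈ insert (Finsupp.single v m) (weightedEdgeExponents G ω),
      g = Finsupp.single v m := by
    rintro g (rfl | ⟨i, j, hij, -⟩)
    exacts [rfl, (hG i j hij).elim]
  refine ⟨v, v, fun x hx _ => Finsupp.single_eq_of_ne hx, fun g hg hne => (hne (hS g hg)).elim,
    fun g hg _ => (hS g hg).ge v⟩

lemma isPeelable_of_leaf_edge {G : SimpleGraph V} {ω : V → V → ℕ} (hsym : ∀ a b, ω a b = ω b a)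
    {v ℓ z : V} (hℓz : G.Adj ℓ z) (hleaf : IsLeafVertex G ℓ) (hℓv : ℓ ≠ v)
    (hmin : ∀ a b, G.Adj a b → ω ℓ z ≤ ω a b) {m : ℕ} (hm : ω ℓ z ≤ m) :
    IsPeelable (insert (Finsupp.single v m) (weightedEdgeExponents G ω))
      (Finsupp.single ℓ (ω ℓ z) + Finsupp.single z (ω ℓ z)) := by
  classical
  refine ⟨ℓ, z, fun x hxℓ hxz => by simp [Ne.symm hxℓ, Ne.symm hxz], ?_, ?_⟩
  · rintro g (rfl | ⟨i, j, hij, rfl⟩) hne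
    · exact Finsupp.single_eq_of_ne hℓv
    have hi : i ≠ ℓ := by
      rintro rfl
      exact hne (by rw [hleaf.unique hij hℓz])
    have hj : j ≠ ℓ := by
      rintro rfl
      obtain rfl := hleaf.unique hij.symm hℓz
      exact hne (by rw [hsym, add_comm])
    simp [hi, hj]
  · rw [Finsupp.add_apply, Finsupp.single_eq_of_ne hℓz.ne', Finsupp.single_eq_same, zero_add]
    rintro g (rfl | ⟨i, j, hij, rfl⟩) hg
    · simp only [Finsupp.single_apply] at hg ⊢
      split_ifs at hg ⊢ <;> omega
    · have := hmin i j hij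
      simp only [Finsupp.add_apply, Finsupp.single_apply] at hg ⊢
      split_ifs at hg ⊢ <;> omega

lemma associatedPrimes_quotient_subset_of_mul {R : Type*} [CommRing R] {p q : Ideal R} (c : R)
    (hmul : ∀ x ∈ p, c * x ∈ q) (hcolon : ∀ x, c * x ∈ q → x ∈ p) :
    associatedPrimes R (R ⧸ p) ⊆ associatedPrimes R (R ⧸ q) := by
  refine associatedPrimes.subset_of_injective
    (f := p.mapQ q (LinearMap.mulLeft R c) hmul) fun x y hxy => ?_
  obtain ⟨x, rfl⟩ := Submodule.Quotient.mk_surjective p x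
  obtain ⟨y, rfl⟩ := Submodule.Quotient.mk_surjective p y
  change (Submodule.Quotient.mk (c * x) : R ⧸ q) = Submodule.Quotient.mk (c * y) at hxy
  rw [Submodule.Quotient.eq] at hxy ⊢
  exact hcolon _ (by rwa [mul_sub])

theorem ass_powers_increasing_general {n : ℕ} (K : Type*) [Field K]
    (G : SimpleGraph (Fin n)) (ω : Fin n → Fin n → ℕ)
    (hsym : ∀ a b, ω a b = ω b a)
    (v : Fin n) (hG : IsIncreasingWeightedTree G ω v)
    (m : ℕ) (hm : muWt G ω v ≤ m)
    (t : ℕ) :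
    associatedPrimes (MvPolynomial (Fin n) K)
      (MvPolynomial (Fin n) K ⧸
        ((Ideal.span {(X v : MvPolynomial (Fin n) K) ^ m} ⊔ weightedEdgeIdeal n K G ω) ^ t)) ⊆
    associatedPrimes (MvPolynomial (Fin n) K)
      (MvPolynomial (Fin n) K ⧸
        ((Ideal.span {(X v : MvPolynomial (Fin n) K) ^ m} ⊔ weightedEdgeIdeal n K G ω) ^ (t + 1))) := by
  set S := insert (Finsupp.single v m) (weightedEdgeExponents G ω)
  obtain ⟨u, huS, hu⟩ : ∃ u ∈ S, IsPeelable S u := by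
    by_cases hedge : ∃ a b, G.Adj a b
    · obtain ⟨ℓ, z, hℓz, hleaf, hℓv, hmin⟩ := hG.exists_leaf_edge_forall_le hsym hedge
      obtain ⟨W⟩ := hG.1.connected.preconnected v ℓ
      have hvy := W.adj_snd (W.not_nil_of_ne hℓv.symm)
      exact ⟨_, Set.mem_insert_of_mem _ ⟨ℓ, z, hℓz, rfl⟩, isPeelable_of_leaf_edge hsym hℓz hleaf
        hℓv hmin ((hmin _ _ hvy).trans ((le_muWt hvy).trans hm))⟩
    · push Not at hedge
      exact ⟨_, Set.mem_insert _ _, isPeelable_of_forall_not_adj hedge v m⟩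
  rw [span_X_pow_sup_weightedEdgeIdeal]
  refine associatedPrimes_quotient_subset_of_mul (monomial u 1) (fun x hx => ?_)
    fun f hf => hu.mem_pow_of_monomial_mul_mem_pow_succ hf
  rw [pow_succ']
  exact Ideal.mul_mem_mul (Ideal.subset_span ⟨u, huS, rfl⟩) hx

/-- Lemma 2.4: if `(G_ω, v)` is an increasing weighted tree and
`m ≥ μ(v)`, then `Ass((v^m, I(G_ω))^t) ⊆ Ass((v^m, I(G_ω))^{t+1})` for all `t ≥ 1`. -/
theorem ass_powers_increasing {n : ℕ} (K : Type*) [Field K]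
    (G : SimpleGraph (Fin n)) (ω : Fin n → Fin n → ℕ)
    (hsym : ∀ a b, ω a b = ω b a) (hpos : ∀ a b, G.Adj a b → 0 < ω a b)
    (v : Fin n) (hG : IsIncreasingWeightedTree G ω v)
    (m : ℕ) (hm : muWt G ω v ≤ m)
    (t : ℕ) (ht : 1 ≤ t) :
    associatedPrimes (MvPolynomial (Fin n) K)
      (MvPolynomial (Fin n) K ⧸
        ((Ideal.span {(X v : MvPolynomial (Fin n) K) ^ m} ⊔ weightedEdgeIdeal n K G ω) ^ t)) ⊆
    associatedPrimes (MvPolynomial (Fin n) K)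
      (MvPolynomial (Fin n) K ⧸
        ((Ideal.span {(X v : MvPolynomial (Fin n) K) ^ m} ⊔ weightedEdgeIdeal n K G ω) ^ (t + 1))) :=
  ass_powers_increasing_general K G ω hsym v hG m hm t
end
end
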